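/- arXiv:1010.3800 — 5 statements merged into one kernel-verified Lean document; each statement's English description precedes it below -/
import Mathlib

section
/- The map sending a triple (ν, w, ρ), where ν and ρ are compositions of r with N parts and w ranges over minimal-length double coset representatives of S_ν \ S_r / S_ρ, to the N×N matrix A = (a_{ij}) with a_{ij} = |R_i^ν ∩ w(R_j^ρ)|, is a bijection onto the set of N×N matrices with nonnegative integer entries summing to r. Moreover the row sums of A equal ν and the column sums equal ρ. -/
def invLen {r : ℕ} (w : Equiv.Perm (Fin r)) : ℕ :=
  (Finset.univ.filter (fun p : Fin r × Fin r => p.1 < p.2 ∧ w p.2 < w p.1)).card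

/-- The partial sum `ν_0 + ... + ν_{k-1}` of a composition with `N` parts. -/
def partialSum {N : ℕ} (ν : Fin N → ℕ) (k : Fin N) : ℕ :=
  ∑ j ∈ Finset.univ.filter (fun j : Fin N => j < k), ν j

/-- The `k`-th row segment `R_k^ν ⊆ {0, ..., r-1}` of a composition `ν` of `r`. -/
def rowSeg {N : ℕ} (r : ℕ) (ν : Fin N → ℕ) (k : Fin N) : Finset (Fin r) :=
  Finset.univ.filter (fun i : Fin r =>
    partialSum ν k ≤ (i : ℕ) ∧ (i : ℕ) < partialSum ν k + ν k)

/-- The Young subgroup of `S_r` stabilizing each row segment of the composition `ν`. -/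
def youngSubgroupF {N : ℕ} (r : ℕ) (ν : Fin N → ℕ) : Subgroup (Equiv.Perm (Fin r)) where
  carrier := {w | ∀ (k : Fin N) (i : Fin r), i ∈ rowSeg r ν k ↔ w i ∈ rowSeg r ν k}
  one_mem' := fun _ _ => Iff.rfl
  mul_mem' := by
    intro a b ha hb k i
    have : (a * b) i = a (b i) := rfl
    rw [this]
    exact (hb k i).trans (ha k (b i))
  inv_mem' := by
    intro a ha k i
    have h := ha k (a⁻¹ i)
    simpa using h.symm

/-- The matrix associated to a double coset: `a_{ij} = |R_i^ν ∩ w(R_j^ρ)|`. -/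
def cosetMatrix {N : ℕ} (r : ℕ) (ν : Fin N → ℕ) (w : Equiv.Perm (Fin r)) (ρ : Fin N → ℕ) :
    Matrix (Fin N) (Fin N) ℕ :=
  fun i j => (rowSeg r ν i ∩ (rowSeg r ρ j).image w).card

/-- The set of triples `(ν, w, ρ)` with `ν, ρ` compositions of `r` with `N` parts and
`w` a minimal-length double coset representative of `S_ν \ S_r / S_ρ`. -/
def tripleSet (N r : ℕ) : Set ((Fin N → ℕ) × Equiv.Perm (Fin r) × (Fin N → ℕ)) :=
  {t | (∑ i, t.1 i) = r ∧ (∑ i, t.2.2 i) = r ∧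
    ∀ a ∈ youngSubgroupF r t.1, ∀ b ∈ youngSubgroupF r t.2.2,
      invLen t.2.1 ≤ invLen (a * t.2.1 * b)}


namespace DCoset

variable {N r : ℕ}

theorem ps_add_le {μ : Fin N → ℕ} {k k' : Fin N} (h : k < k') :
    partialSum μ k + μ k ≤ partialSum μ k' := by
  have hk : k ∉ Finset.univ.filter (fun j : Fin N => j < k) := by simp
  have hsub : insert k (Finset.univ.filter (fun j : Fin N => j < k)) ⊆
      Finset.univ.filter (fun j : Fin N => j < k') := by
    intro x hx
    simp only [Finset.mem_insert, Finset.mem_filter, Finset.mem_univ, true_and] at hx ⊢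
    rcases hx with rfl | hx
    · exact h
    · exact hx.trans h
  calc partialSum μ k + μ k = ∑ j ∈ insert k (Finset.univ.filter (fun j : Fin N => j < k)), μ j := by
        rw [Finset.sum_insert hk, partialSum, Nat.add_comm]
    _ ≤ _ := Finset.sum_le_sum_of_subset hsub

theorem ps_add_le_total {μ : Fin N → ℕ} (k : Fin N) :
    partialSum μ k + μ k ≤ ∑ i, μ i := by
  have hk : k ∉ Finset.univ.filter (fun j : Fin N => j < k) := by simp
  calc partialSum μ k + μ k = ∑ j ∈ insert k (Finset.univ.filter (fun j : Fin N => j < k)), μ j := by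
        rw [Finset.sum_insert hk, partialSum, Nat.add_comm]
    _ ≤ _ := Finset.sum_le_sum_of_subset (Finset.subset_univ _)

theorem block_unique {μ : Fin N → ℕ} {s : ℕ} {k k' : Fin N}
    (h1 : partialSum μ k ≤ s) (h2 : s < partialSum μ k + μ k)
    (h1' : partialSum μ k' ≤ s) (h2' : s < partialSum μ k' + μ k') : k = k' := by
  by_contra hne
  rcases lt_or_gt_of_ne hne with h | h
  · exact absurd (ps_add_le (μ := μ) h) (by omega)
  · exact absurd (ps_add_le (μ := μ) h) (by omega)

theorem exists_block {μ : Fin N → ℕ} {s : ℕ} (hs : s < ∑ i, μ i) :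
    ∃ k, partialSum μ k ≤ s ∧ s < partialSum μ k + μ k := by
  have hN : 0 < N := by
    by_contra h
    have : N = 0 := by omega
    subst this
    simp at hs
  set T := Finset.univ.filter (fun k : Fin N => partialSum μ k ≤ s) with hT
  have hT0 : (⟨0, hN⟩ : Fin N) ∈ T := by
    simp only [hT, Finset.mem_filter, Finset.mem_univ, true_and]
    have : Finset.univ.filter (fun j : Fin N => j < (⟨0, hN⟩ : Fin N)) = ∅ := by
      apply Finset.eq_empty_of_forall_notMem
      intro x
      simp [Fin.lt_def]
    simp [partialSum, this]
  have hTne : T.Nonempty := ⟨_, hT0⟩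
  refine ⟨T.max' hTne, (Finset.mem_filter.mp (T.max'_mem hTne)).2, ?_⟩
  set k := T.max' hTne with hk
  by_contra hcon
  push_neg at hcon
  -- show partialSum μ k + μ k = partialSum of successor or total
  by_cases hlast : (k : ℕ) + 1 < N
  · set k' : Fin N := ⟨(k : ℕ) + 1, hlast⟩ with hk'
    have hps : partialSum μ k' = partialSum μ k + μ k := by
      have : Finset.univ.filter (fun j : Fin N => j < k') =
          insert k (Finset.univ.filter (fun j : Fin N => j < k)) := by
        ext x
        have hk'v : ((⟨(k : ℕ) + 1, hlast⟩ : Fin N) : ℕ) = (k : ℕ) + 1 := rfl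
        simp only [Finset.mem_filter, Finset.mem_univ, true_and, Finset.mem_insert, Fin.lt_def]
        constructor
        · intro hx
          rcases Nat.lt_or_ge (x : ℕ) (k : ℕ) with h | h
          · exact Or.inr h
          · left; apply Fin.ext; omega
        · rintro (rfl | hx)
          · omega
          · omega
      rw [partialSum, this, Finset.sum_insert (by simp), ← partialSum]; ring
    have hk'T : k' ∈ T := by
      simp only [hT, Finset.mem_filter, Finset.mem_univ, true_and, hps]
      exact hcon
    have := Finset.le_max' T k' hk'T
    rw [← hk] at this
    have : (k' : ℕ) ≤ (k : ℕ) := this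
    simp [hk'] at this
  · -- k is the last index
    have huniv : (Finset.univ : Finset (Fin N)) =
        insert k (Finset.univ.filter (fun j : Fin N => j < k)) := by
      ext x
      simp only [Finset.mem_univ, true_iff, Finset.mem_insert, Finset.mem_filter, true_and,
        Fin.lt_def]
      rcases Nat.lt_or_ge (x : ℕ) (k : ℕ) with h | h
      · exact Or.inr h
      · left; apply Fin.ext; have := x.isLt; omega
    have : ∑ i, μ i = partialSum μ k + μ k := by
      rw [huniv, Finset.sum_insert (by simp), ← partialSum]; ring
    omega

noncomputable def blockIdx (μ : Fin N → ℕ) {s : ℕ} (hs : s < ∑ i, μ i) : Fin N :=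
  (exists_block hs).choose

theorem blockIdx_spec (μ : Fin N → ℕ) {s : ℕ} (hs : s < ∑ i, μ i) :
    partialSum μ (blockIdx μ hs) ≤ s ∧ s < partialSum μ (blockIdx μ hs) + μ (blockIdx μ hs) :=
  (exists_block hs).choose_spec

theorem blockIdx_eq {μ : Fin N → ℕ} {s : ℕ} (hs : s < ∑ i, μ i) {k : Fin N}
    (h1 : partialSum μ k ≤ s) (h2 : s < partialSum μ k + μ k) : blockIdx μ hs = k :=
  block_unique (blockIdx_spec μ hs).1 (blockIdx_spec μ hs).2 h1 h2

theorem mem_rowSeg {ν : Fin N → ℕ} {k : Fin N} {i : Fin r} :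
    i ∈ rowSeg r ν k ↔ partialSum ν k ≤ (i : ℕ) ∧ (i : ℕ) < partialSum ν k + ν k := by
  simp [rowSeg]

theorem rowSeg_unique {ν : Fin N → ℕ} {k k' : Fin N} {i : Fin r}
    (h : i ∈ rowSeg r ν k) (h' : i ∈ rowSeg r ν k') : k = k' := by
  rw [mem_rowSeg] at h h'
  exact block_unique h.1 h.2 h'.1 h'.2

noncomputable def segIdx {ν : Fin N → ℕ} (hν : ∑ i, ν i = r) (i : Fin r) : Fin N :=
  blockIdx ν (show (i : ℕ) < ∑ k, ν k from hν ▸ i.isLt)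

theorem segIdx_spec {ν : Fin N → ℕ} (hν : ∑ i, ν i = r) (i : Fin r) :
    i ∈ rowSeg r ν (segIdx hν i) := by
  rw [mem_rowSeg]
  exact blockIdx_spec ν _

theorem segIdx_eq {ν : Fin N → ℕ} (hν : ∑ i, ν i = r) {i : Fin r} {k : Fin N}
    (h : i ∈ rowSeg r ν k) : segIdx hν i = k := by
  rw [mem_rowSeg] at h
  exact blockIdx_eq _ h.1 h.2

theorem card_interval {a m : ℕ} (h : a + m ≤ r) :
    (Finset.univ.filter (fun p : Fin r => a ≤ (p : ℕ) ∧ (p : ℕ) < a + m)).card = m := by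
  have h2 : (Finset.univ.filter (fun p : Fin r => a ≤ (p : ℕ) ∧ (p : ℕ) < a + m)).card
      = (Finset.Ico a (a + m)).card := by
    refine Finset.card_bij (fun p _ => (p : ℕ)) ?_ ?_ ?_
    · intro p hp
      simp only [Finset.mem_filter] at hp
      simp only [Finset.mem_Ico]
      exact hp.2
    · intro p hp q hq hpq
      exact Fin.ext hpq
    · intro x hx
      simp only [Finset.mem_Ico] at hx
      refine ⟨⟨x, by omega⟩, ?_, rfl⟩
      simp only [Finset.mem_filter, Finset.mem_univ, true_and]
      exact hx
  rw [h2, Nat.card_Ico]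
  omega

theorem card_rowSeg {ν : Fin N → ℕ} (hν : ∑ i, ν i = r) (k : Fin N) :
    (rowSeg r ν k).card = ν k := by
  rw [rowSeg]
  exact card_interval (hν ▸ ps_add_le_total k)

end DCoset

namespace DCoset

variable {N r : ℕ}

theorem mem_young_iff {ν : Fin N → ℕ} {a : Equiv.Perm (Fin r)} :
    a ∈ youngSubgroupF r ν ↔ ∀ (k : Fin N) (i : Fin r), i ∈ rowSeg r ν k ↔ a i ∈ rowSeg r ν k :=
  Iff.rfl

theorem mem_image_equiv {w : Equiv.Perm (Fin r)} {T : Finset (Fin r)} {x : Fin r} :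
    x ∈ T.image w ↔ w.symm x ∈ T := by
  simp only [Finset.mem_image]
  constructor
  · rintro ⟨p, hp, rfl⟩; simpa using hp
  · intro h; exact ⟨w.symm x, h, by simp⟩

theorem young_image {ν : Fin N → ℕ} {a : Equiv.Perm (Fin r)} (ha : a ∈ youngSubgroupF r ν)
    (k : Fin N) : (rowSeg r ν k).image a = rowSeg r ν k := by
  apply Finset.eq_of_subset_of_card_le
  · intro x hx
    rw [mem_image_equiv] at hx
    have := (mem_young_iff.mp ha k (a.symm x)).mp hx
    simpa using this
  · rw [Finset.card_image_of_injective _ a.injective]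

theorem inter_image_eq_filter {ν ρ : Fin N → ℕ} (w : Equiv.Perm (Fin r)) (i j : Fin N) :
    rowSeg r ν i ∩ (rowSeg r ρ j).image w
      = (rowSeg r ν i).filter (fun x => w.symm x ∈ rowSeg r ρ j) := by
  ext x
  simp only [Finset.mem_inter, Finset.mem_filter, mem_image_equiv]

theorem cosetMatrix_eq_filter_card {ν ρ : Fin N → ℕ} (w : Equiv.Perm (Fin r)) (i j : Fin N) :
    cosetMatrix r ν w ρ i j = ((rowSeg r ρ j).filter (fun p => w p ∈ rowSeg r ν i)).card := by
  rw [cosetMatrix]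
  have himg : rowSeg r ν i ∩ (rowSeg r ρ j).image w
      = ((rowSeg r ρ j).filter (fun p => w p ∈ rowSeg r ν i)).image w := by
    ext x
    simp only [Finset.mem_inter, Finset.mem_image, Finset.mem_filter]
    constructor
    · rintro ⟨hx1, p, hp, rfl⟩
      exact ⟨p, ⟨hp, hx1⟩, rfl⟩
    · rintro ⟨p, ⟨hp, hp2⟩, rfl⟩
      exact ⟨hp2, p, hp, rfl⟩
  rw [himg, Finset.card_image_of_injective _ w.injective]

/-- fiberwise counting over the segments of `ρ` of preimages -/
theorem card_eq_sum_filter {ρ : Fin N → ℕ} (hρ : ∑ i, ρ i = r) (f : Fin r → Fin r)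
    (T : Finset (Fin r)) :
    T.card = ∑ j, (T.filter (fun x => f x ∈ rowSeg r ρ j)).card := by
  rw [Finset.card_eq_sum_card_fiberwise (f := fun x => segIdx hρ (f x)) (t := Finset.univ)
    (fun x _ => Finset.mem_univ _)]
  apply Finset.sum_congr rfl
  intro j _
  congr 1
  ext x
  simp only [Finset.mem_filter]
  constructor
  · rintro ⟨hx, rfl⟩; exact ⟨hx, segIdx_spec hρ _⟩
  · rintro ⟨hx, h⟩; exact ⟨hx, segIdx_eq hρ h⟩

theorem row_sums {ν ρ : Fin N → ℕ} (hρ : ∑ i, ρ i = r) (hν : ∑ i, ν i = r)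
    (w : Equiv.Perm (Fin r)) (i : Fin N) :
    ∑ j, cosetMatrix r ν w ρ i j = ν i := by
  have := card_eq_sum_filter hρ (fun x => w.symm x) (rowSeg r ν i)
  rw [card_rowSeg hν] at this
  rw [this]
  apply Finset.sum_congr rfl
  intro j _
  rw [cosetMatrix, inter_image_eq_filter]

theorem col_sums {ν ρ : Fin N → ℕ} (hρ : ∑ i, ρ i = r) (hν : ∑ i, ν i = r)
    (w : Equiv.Perm (Fin r)) (j : Fin N) :
    ∑ i, cosetMatrix r ν w ρ i j = ρ j := by
  have := card_eq_sum_filter hν (fun p => w p) (rowSeg r ρ j)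
  rw [card_rowSeg hρ] at this
  rw [this]
  apply Finset.sum_congr rfl
  intro i _
  rw [cosetMatrix_eq_filter_card]

theorem cosetMatrix_invariant {ν ρ : Fin N → ℕ} {a b w : Equiv.Perm (Fin r)}
    (ha : a ∈ youngSubgroupF r ν) (hb : b ∈ youngSubgroupF r ρ) :
    cosetMatrix r ν (a * w * b) ρ = cosetMatrix r ν w ρ := by
  funext i j
  rw [cosetMatrix, cosetMatrix]
  have himg : (rowSeg r ρ j).image (a * w * b) = ((rowSeg r ρ j).image w).image a := by
    have h1 : (rowSeg r ρ j).image (a * w * b)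
        = (((rowSeg r ρ j).image b).image w).image a := by
      rw [Finset.image_image, Finset.image_image]
      rfl
    rw [h1, young_image hb]
  rw [himg]
  have key : rowSeg r ν i ∩ ((rowSeg r ρ j).image w).image a
      = ((rowSeg r ν i ∩ (rowSeg r ρ j).image w)).image a := by
    rw [Finset.image_inter _ _ a.injective, young_image ha]
  rw [key, Finset.card_image_of_injective _ a.injective]

end DCoset

namespace DCoset

variable {N r : ℕ}

/-- adjacent swap is order preserving except on the pair itself -/
theorem swap_adj_lt {p q x y : Fin r} (hpq : (p : ℕ) + 1 = (q : ℕ)) (hxy : x < y)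
    (hne : ¬(x = p ∧ y = q)) : Equiv.swap p q x < Equiv.swap p q y := by
  have hxy' : (x : ℕ) < (y : ℕ) := hxy
  rcases eq_or_ne x p with rfl | hxp
  · have hyq : y ≠ q := fun h => hne ⟨rfl, h⟩
    have hyp : y ≠ x := Fin.ne_of_gt hxy
    rw [Equiv.swap_apply_left, Equiv.swap_apply_of_ne_of_ne hyp hyq]
    have h1 : (y : ℕ) ≠ (q : ℕ) := fun h => hyq (Fin.ext h)
    exact Fin.lt_def.mpr (by omega)
  · rcases eq_or_ne x q with rfl | hxq
    · have hyp : y ≠ p := fun h => by rw [h] at hxy'; omega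
      have hyq : y ≠ x := Fin.ne_of_gt hxy
      rw [Equiv.swap_apply_right, Equiv.swap_apply_of_ne_of_ne hyp hyq]
      exact Fin.lt_def.mpr (by omega)
    · rcases eq_or_ne y p with rfl | hyp
      · rw [Equiv.swap_apply_left, Equiv.swap_apply_of_ne_of_ne hxp hxq]
        have h1 : (y : ℕ) < (q : ℕ) := by omega
        exact Fin.lt_def.mpr (by omega)
      · rcases eq_or_ne y q with rfl | hyq
        · rw [Equiv.swap_apply_right, Equiv.swap_apply_of_ne_of_ne hxp hxq]
          have h1 : (x : ℕ) ≠ (p : ℕ) := fun h => hxp (Fin.ext h)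
          exact Fin.lt_def.mpr (by omega)
        · rw [Equiv.swap_apply_of_ne_of_ne hxp hxq, Equiv.swap_apply_of_ne_of_ne hyp hyq]
          exact hxy

theorem invLen_mul_swap_lt {w : Equiv.Perm (Fin r)} {p q : Fin r}
    (hpq : (p : ℕ) + 1 = (q : ℕ)) (hw : w q < w p) :
    invLen (w * Equiv.swap p q) < invLen w := by
  classical
  set s := Equiv.swap p q with hs
  have hplt : p < q := Fin.lt_def.mpr (by omega)
  set Invw := Finset.univ.filter (fun z : Fin r × Fin r => z.1 < z.2 ∧ w z.2 < w z.1) with hIw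
  set Invu := Finset.univ.filter
    (fun z : Fin r × Fin r => z.1 < z.2 ∧ (w * s) z.2 < (w * s) z.1) with hIu
  have hmem : (p, q) ∈ Invw := by
    simp only [hIw, Finset.mem_filter, Finset.mem_univ, true_and]
    exact ⟨hplt, hw⟩
  have hle : Invu.card ≤ (Invw.erase (p, q)).card := by
    apply Finset.card_le_card_of_injOn (fun z => (s z.1, s z.2))
    · intro z hz
      simp only [hIu, Finset.mem_coe, Finset.mem_filter, Finset.mem_univ, true_and] at hz
      obtain ⟨hlt, hinv⟩ := hz
      have hz1 : (w * s) z.2 = w (s z.2) := rfl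
      have hz2 : (w * s) z.1 = w (s z.1) := rfl
      rw [hz1, hz2] at hinv
      have hne : ¬(z.1 = p ∧ z.2 = q) := by
        rintro ⟨h1, h2⟩
        rw [h1, h2] at hinv
        have e1 : s q = p := Equiv.swap_apply_right p q
        have e2 : s p = q := Equiv.swap_apply_left p q
        rw [e1, e2] at hinv
        exact absurd hinv (not_lt.mpr (le_of_lt hw))
      have hlt' : s z.1 < s z.2 := swap_adj_lt hpq hlt hne
      simp only [Finset.mem_coe, Finset.mem_erase, hIw, Finset.mem_filter, Finset.mem_univ, true_and]
      refine ⟨?_, hlt', hinv⟩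
      intro hcon
      have h1 : s z.1 = p := congrArg Prod.fst hcon
      have h2 : s z.2 = q := congrArg Prod.snd hcon
      have : z.1 = s p := by rw [← h1]; simp [hs]
      have hq1 : z.1 = q := by rw [this, Equiv.swap_apply_left]
      have : z.2 = s q := by rw [← h2]; simp [hs]
      have hp2 : z.2 = p := by rw [this, Equiv.swap_apply_right]
      rw [hq1, hp2] at hlt
      exact absurd hlt (not_lt.mpr (le_of_lt hplt))
    · intro z1 _ z2 _ h
      have h1 : s z1.1 = s z2.1 := congrArg Prod.fst h
      have h2 : s z1.2 = s z2.2 := congrArg Prod.snd h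
      exact Prod.ext (s.injective h1) (s.injective h2)
  have hcard : (Invw.erase (p, q)).card < Invw.card :=
    Finset.card_erase_lt_of_mem hmem
  calc invLen (w * s) = Invu.card := rfl
    _ ≤ (Invw.erase (p, q)).card := hle
    _ < Invw.card := hcard

theorem invLen_swap_mul_lt {w : Equiv.Perm (Fin r)} {p q : Fin r}
    (hpq : (p : ℕ) + 1 = (q : ℕ)) (hw : w.symm q < w.symm p) :
    invLen (Equiv.swap p q * w) < invLen w := by
  classical
  set s := Equiv.swap p q with hs
  have hplt : p < q := Fin.lt_def.mpr (by omega)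
  set m := w.symm q with hm
  set m' := w.symm p with hm'
  have hmm' : m < m' := hw
  have hwm : w m = q := by simp [hm]
  have hwm' : w m' = p := by simp [hm']
  set Invw := Finset.univ.filter (fun z : Fin r × Fin r => z.1 < z.2 ∧ w z.2 < w z.1) with hIw
  set Invu := Finset.univ.filter
    (fun z : Fin r × Fin r => z.1 < z.2 ∧ (s * w) z.2 < (s * w) z.1) with hIu
  have hmem : (m, m') ∈ Invw := by
    simp only [hIw, Finset.mem_filter, Finset.mem_univ, true_and]
    refine ⟨hmm', ?_⟩
    rw [hwm, hwm']
    exact hplt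
  have hsub : Invu ⊆ Invw.erase (m, m') := by
    intro z hz
    simp only [hIu, Finset.mem_filter, Finset.mem_univ, true_and] at hz
    obtain ⟨hlt, hinv⟩ := hz
    have e1 : (s * w) z.2 = s (w z.2) := rfl
    have e2 : (s * w) z.1 = s (w z.1) := rfl
    rw [e1, e2] at hinv
    have hkey : w z.2 < w z.1 := by
      by_contra hcon
      push_neg at hcon
      have hne : w z.1 ≠ w z.2 := fun h => (Fin.ne_of_lt hlt) (w.injective h)
      have hlt2 : w z.1 < w z.2 := lt_of_le_of_ne hcon hne
      by_cases hcase : w z.1 = p ∧ w z.2 = q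
      · -- then z.1 = m', z.2 = m, contradicting z.1 < z.2 and m < m'
        have hz1 : z.1 = m' := by
          rw [hm', ← hcase.1]; simp
        have hz2 : z.2 = m := by
          rw [hm, ← hcase.2]; simp
        rw [hz1, hz2] at hlt
        exact absurd hlt (not_lt.mpr (le_of_lt hmm'))
      · have := swap_adj_lt hpq hlt2 hcase
        exact absurd hinv (not_lt.mpr (le_of_lt this))
    simp only [Finset.mem_erase, hIw, Finset.mem_filter, Finset.mem_univ, true_and]
    refine ⟨?_, hlt, hkey⟩
    intro hcon
    have h1 : z.1 = m := congrArg Prod.fst hcon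
    have h2 : z.2 = m' := congrArg Prod.snd hcon
    rw [h1, h2, hwm, hwm'] at hinv
    rw [Equiv.swap_apply_left, Equiv.swap_apply_right] at hinv
    exact absurd hinv (not_lt.mpr (le_of_lt hplt))
  calc invLen (s * w) = Invu.card := rfl
    _ ≤ (Invw.erase (m, m')).card := Finset.card_le_card hsub
    _ < Invw.card := Finset.card_erase_lt_of_mem hmem

/-- if f is increasing on adjacent pairs in a segment, it is increasing on the segment -/
theorem mono_of_adjacent {ρ : Fin N → ℕ} {k : Fin N} {f : Fin r → Fin r}
    (h : ∀ p q : Fin r, p ∈ rowSeg r ρ k → q ∈ rowSeg r ρ k → (p : ℕ) + 1 = (q : ℕ) →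
      f p < f q) :
    ∀ p q : Fin r, p ∈ rowSeg r ρ k → q ∈ rowSeg r ρ k → p < q → f p < f q := by
  suffices H : ∀ n : ℕ, ∀ p q : Fin r, p ∈ rowSeg r ρ k → q ∈ rowSeg r ρ k →
      (q : ℕ) = (p : ℕ) + n + 1 → f p < f q by
    intro p q hp hq hlt
    have : (q : ℕ) = (p : ℕ) + ((q : ℕ) - (p : ℕ) - 1) + 1 := by
      have : (p : ℕ) < (q : ℕ) := hlt
      omega
    exact H _ p q hp hq this
  intro n
  induction n with
  | zero => intro p q hp hq hpq; exact h p q hp hq (by omega)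
  | succ n ih =>
    intro p q hp hq hpq
    have hqr := q.isLt
    set mid : Fin r := ⟨(p : ℕ) + n + 1, by omega⟩ with hmid
    have hmidv : (mid : ℕ) = (p : ℕ) + n + 1 := rfl
    have hmidmem : mid ∈ rowSeg r ρ k := by
      rw [mem_rowSeg] at hp hq ⊢
      omega
    have h1 : f p < f mid := ih p mid hp hmidmem hmidv
    have h2 : f mid < f q := h mid q hmidmem hq (by omega)
    exact h1.trans h2

theorem swap_mem_young {ρ : Fin N → ℕ} {k0 : Fin N} {p q : Fin r}
    (hp : p ∈ rowSeg r ρ k0) (hq : q ∈ rowSeg r ρ k0) :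
    Equiv.swap p q ∈ youngSubgroupF r ρ := by
  rw [mem_young_iff]
  intro k i
  rcases eq_or_ne i p with rfl | hip
  · rw [Equiv.swap_apply_left]
    constructor
    · intro h; have e := rowSeg_unique h hp; rw [e]; exact hq
    · intro h; have e := rowSeg_unique h hq; rw [e]; exact hp
  · rcases eq_or_ne i q with rfl | hiq
    · rw [Equiv.swap_apply_right]
      constructor
      · intro h; have e := rowSeg_unique h hq; rw [e]; exact hp
      · intro h; have e := rowSeg_unique h hp; rw [e]; exact hq
    · rw [Equiv.swap_apply_of_ne_of_ne hip hiq]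

/-- sortedness -/
def SortedW (r : ℕ) (ν ρ : Fin N → ℕ) (w : Equiv.Perm (Fin r)) : Prop :=
  (∀ (j : Fin N) (p q : Fin r), p ∈ rowSeg r ρ j → q ∈ rowSeg r ρ j → p < q → w p < w q) ∧
  (∀ (i : Fin N) (x y : Fin r), x ∈ rowSeg r ν i → y ∈ rowSeg r ν i → x < y →
    w.symm x < w.symm y)

theorem sorted_of_minimal {ν ρ : Fin N → ℕ} {w : Equiv.Perm (Fin r)}
    (hmin : ∀ a ∈ youngSubgroupF r ν, ∀ b ∈ youngSubgroupF r ρ,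
      invLen w ≤ invLen (a * w * b)) :
    SortedW r ν ρ w := by
  constructor
  · intro j
    by_contra hcon
    push_neg at hcon
    -- get an adjacent descent
    have hadj : ¬(∀ p q : Fin r, p ∈ rowSeg r ρ j → q ∈ rowSeg r ρ j →
        (p : ℕ) + 1 = (q : ℕ) → w p < w q) := by
      intro hall
      obtain ⟨p, q, hp, hq, hlt, hnlt⟩ := hcon
      exact absurd (mono_of_adjacent hall p q hp hq hlt) (not_lt.mpr hnlt)
    push_neg at hadj
    obtain ⟨p, q, hp, hq, hpq, hnlt⟩ := hadj
    have hne : w q ≠ w p := fun h => by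
      have : q = p := w.injective h
      rw [this] at hpq; omega
    have hdesc : w q < w p := lt_of_le_of_ne hnlt hne
    have hb : Equiv.swap p q ∈ youngSubgroupF r ρ := swap_mem_young hp hq
    have h1 := hmin 1 (one_mem _) (Equiv.swap p q) hb
    rw [one_mul] at h1
    exact absurd h1 (not_le.mpr (invLen_mul_swap_lt hpq hdesc))
  · intro i
    by_contra hcon
    push_neg at hcon
    have hadj : ¬(∀ x y : Fin r, x ∈ rowSeg r ν i → y ∈ rowSeg r ν i →
        (x : ℕ) + 1 = (y : ℕ) → w.symm x < w.symm y) := by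
      intro hall
      obtain ⟨x, y, hx, hy, hlt, hnlt⟩ := hcon
      exact absurd (mono_of_adjacent hall x y hx hy hlt) (not_lt.mpr hnlt)
    push_neg at hadj
    obtain ⟨x, y, hx, hy, hxy, hnlt⟩ := hadj
    have hne : w.symm y ≠ w.symm x := fun h => by
      have : y = x := w.symm.injective h
      rw [this] at hxy; omega
    have hdesc : w.symm y < w.symm x := lt_of_le_of_ne hnlt hne
    have ha : Equiv.swap x y ∈ youngSubgroupF r ν := swap_mem_young hx hy
    have h1 := hmin (Equiv.swap x y) ha 1 (one_mem _)
    rw [mul_one] at h1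
    exact absurd h1 (not_le.mpr (invLen_swap_mul_lt hxy hdesc))

end DCoset

namespace DCoset

variable {N r : ℕ}

theorem seg_lt_seg {ρ : Fin N → ℕ} {j j' : Fin N} {u v : Fin r}
    (hu : u ∈ rowSeg r ρ j) (hv : v ∈ rowSeg r ρ j') (hjj : j < j') : u < v := by
  rw [mem_rowSeg] at hu hv
  have := ps_add_le (μ := ρ) hjj
  exact Fin.lt_def.mpr (by omega)

theorem cosetMatrix_eq_filter_symm_card {ν ρ : Fin N → ℕ} (w : Equiv.Perm (Fin r))
    (i j : Fin N) :
    cosetMatrix r ν w ρ i j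
      = ((rowSeg r ν i).filter (fun x => w.symm x ∈ rowSeg r ρ j)).card := by
  rw [cosetMatrix, inter_image_eq_filter]

theorem window {ν ρ : Fin N → ℕ} (hν : ∑ i, ν i = r) (hρ : ∑ i, ρ i = r)
    {w : Equiv.Perm (Fin r)} (hw : SortedW r ν ρ w) {i j : Fin N} {x : Fin r}
    (hx : x ∈ rowSeg r ν i) :
    x ∈ (rowSeg r ρ j).image w ↔
      partialSum ν i + partialSum (fun j' => cosetMatrix r ν w ρ i j') j ≤ (x : ℕ) ∧
      (x : ℕ) < partialSum ν i + partialSum (fun j' => cosetMatrix r ν w ρ i j') j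
        + cosetMatrix r ν w ρ i j := by
  have hforward : ∀ j0 : Fin N, x ∈ (rowSeg r ρ j0).image w →
      partialSum ν i + partialSum (fun j' => cosetMatrix r ν w ρ i j') j0 ≤ (x : ℕ) ∧
      (x : ℕ) < partialSum ν i + partialSum (fun j' => cosetMatrix r ν w ρ i j') j0
        + cosetMatrix r ν w ρ i j0 := by
    intro j0 hximg
    have hxw : w.symm x ∈ rowSeg r ρ j0 := mem_image_equiv.mp hximg
    rw [mem_rowSeg] at hx
    set S := (rowSeg r ν i).filter (fun y => y < x) with hS
    have hcardS : S.card = (x : ℕ) - partialSum ν i := by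
      have hSeq : S = Finset.univ.filter (fun y : Fin r =>
          partialSum ν i ≤ (y : ℕ) ∧ (y : ℕ) < partialSum ν i + ((x : ℕ) - partialSum ν i)) := by
        ext y
        simp only [hS, Finset.mem_filter, mem_rowSeg, Finset.mem_univ, true_and, Fin.lt_def]
        omega
      rw [hSeq, card_interval (by omega)]
    have hdecomp := card_eq_sum_filter hρ (fun y => w.symm y) S
    set g : Fin N → ℕ := fun j' => (S.filter (fun y => w.symm y ∈ rowSeg r ρ j')).card with hg
    -- values of g below j0
    have hglt : ∀ j' : Fin N, j' < j0 → g j' = cosetMatrix r ν w ρ i j' := by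
      intro j' hj'
      have hset : S.filter (fun y => w.symm y ∈ rowSeg r ρ j')
          = (rowSeg r ν i).filter (fun y => w.symm y ∈ rowSeg r ρ j') := by
        ext y
        simp only [hS, Finset.filter_filter, Finset.mem_filter]
        constructor
        · rintro ⟨hy1, _, hy3⟩; exact ⟨hy1, hy3⟩
        · rintro ⟨hy1, hy3⟩
          refine ⟨hy1, ?_, hy3⟩
          rcases lt_trichotomy y x with h | h | h
          · exact h
          · exfalso; subst h
            exact absurd (rowSeg_unique hy3 hxw) (Fin.ne_of_lt hj')
          · exfalso
            have hmono := hw.2 i x y (mem_rowSeg.mpr hx) hy1 h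
            exact absurd hmono (not_lt.mpr (le_of_lt (seg_lt_seg hy3 hxw hj')))
      show (S.filter (fun y => w.symm y ∈ rowSeg r ρ j')).card = _
      rw [hset, cosetMatrix_eq_filter_symm_card]
    have hggt : ∀ j' : Fin N, j0 < j' → g j' = 0 := by
      intro j' hj'
      rw [hg, Finset.card_eq_zero]
      apply Finset.eq_empty_of_forall_notMem
      intro y hy
      simp only [hS, Finset.filter_filter, Finset.mem_filter] at hy
      obtain ⟨hy1, hy2, hy3⟩ := hy
      have hmono := hw.2 i y x hy1 (mem_rowSeg.mpr hx) hy2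
      exact absurd hmono (not_lt.mpr (le_of_lt (seg_lt_seg hxw hy3 hj')))
    have hAcard : cosetMatrix r ν w ρ i j0
        = ((rowSeg r ν i).filter (fun y => w.symm y ∈ rowSeg r ρ j0)).card :=
      cosetMatrix_eq_filter_symm_card w i j0
    have hxmem : x ∈ (rowSeg r ν i).filter (fun y => w.symm y ∈ rowSeg r ρ j0) := by
      simp only [Finset.mem_filter]
      exact ⟨mem_rowSeg.mpr hx, hxw⟩
    have hApos : 1 ≤ cosetMatrix r ν w ρ i j0 := by
      rw [hAcard]
      exact Finset.card_pos.mpr ⟨x, hxmem⟩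
    have hgj0 : g j0 ≤ cosetMatrix r ν w ρ i j0 - 1 := by
      have hsub : S.filter (fun y => w.symm y ∈ rowSeg r ρ j0)
          ⊆ ((rowSeg r ν i).filter (fun y => w.symm y ∈ rowSeg r ρ j0)).erase x := by
        intro y hy
        simp only [hS, Finset.filter_filter, Finset.mem_filter] at hy
        simp only [Finset.mem_erase, Finset.mem_filter]
        exact ⟨Fin.ne_of_lt hy.2.1, hy.1, hy.2.2⟩
      calc g j0 ≤ _ := Finset.card_le_card hsub
        _ = _ := by rw [Finset.card_erase_of_mem hxmem, hAcard]
    have hsplit : ∑ j', g j'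
        = (∑ j' ∈ Finset.univ.filter (fun j' => j' < j0), g j')
          + ∑ j' ∈ Finset.univ.filter (fun j' => ¬ j' < j0), g j' :=
      (Finset.sum_filter_add_sum_filter_not _ _ _).symm
    have hfirst : ∑ j' ∈ Finset.univ.filter (fun j' => j' < j0), g j'
        = partialSum (fun j' => cosetMatrix r ν w ρ i j') j0 := by
      rw [partialSum]
      apply Finset.sum_congr rfl
      intro j' hj'
      simp only [Finset.mem_filter, Finset.mem_univ, true_and] at hj'
      exact hglt j' hj'
    have hsecond : ∑ j' ∈ Finset.univ.filter (fun j' => ¬ j' < j0), g j' = g j0 := by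
      apply Finset.sum_eq_single_of_mem
      · simp
      · intro j' hj' hne
        simp only [Finset.mem_filter, Finset.mem_univ, true_and] at hj'
        have : j0 < j' := lt_of_le_of_ne (not_lt.mp hj') (Ne.symm hne)
        exact hggt j' this
    rw [hsplit, hfirst, hsecond] at hdecomp
    rw [hcardS] at hdecomp
    omega
  constructor
  · exact hforward j
  · intro hwin
    have hxw : w.symm x ∈ rowSeg r ρ (segIdx hρ (w.symm x)) := segIdx_spec hρ _
    set j0 := segIdx hρ (w.symm x) with hj0
    have himg : x ∈ (rowSeg r ρ j0).image w := mem_image_equiv.mpr hxw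
    have hwin0 := hforward j0 himg
    have : j = j0 := by
      by_contra hne
      rcases lt_or_gt_of_ne hne with h | h
      · have hps : partialSum (fun j' => cosetMatrix r ν w ρ i j') j + cosetMatrix r ν w ρ i j
            ≤ partialSum (fun j' => cosetMatrix r ν w ρ i j') j0 :=
          ps_add_le (μ := fun j' => cosetMatrix r ν w ρ i j') h
        omega
      · have hps : partialSum (fun j' => cosetMatrix r ν w ρ i j') j0 + cosetMatrix r ν w ρ i j0
            ≤ partialSum (fun j' => cosetMatrix r ν w ρ i j') j :=
          ps_add_le (μ := fun j' => cosetMatrix r ν w ρ i j') h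
        omega
    rw [this]
    exact himg

theorem rank_inj {T : Finset (Fin r)} {x y : Fin r} (hx : x ∈ T) (hy : y ∈ T)
    (h : (T.filter (fun z => z < x)).card = (T.filter (fun z => z < y)).card) : x = y := by
  have key : ∀ u v : Fin r, u ∈ T → v ∈ T → u < v →
      (T.filter (fun z => z < u)).card < (T.filter (fun z => z < v)).card := by
    intro u v hu hv huv
    apply Finset.card_lt_card
    constructor
    · intro z hz
      simp only [Finset.mem_filter] at hz ⊢
      exact ⟨hz.1, hz.2.trans huv⟩
    · intro hcon
      have : u ∈ T.filter (fun z => z < u) := hcon (by simp [Finset.mem_filter, hu, huv])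
      simp only [Finset.mem_filter] at this
      exact absurd this.2 (lt_irrefl u)
  rcases lt_trichotomy x y with hlt | heq | hlt
  · exact absurd h (Nat.ne_of_lt (key x y hx hy hlt))
  · exact heq
  · exact absurd h (Nat.ne_of_gt (key y x hy hx hlt))

theorem rank_image {ρ : Fin N → ℕ} {u : Equiv.Perm (Fin r)} {j : Fin N} {p : Fin r}
    (hp : p ∈ rowSeg r ρ j)
    (hmono : ∀ (y q : Fin r), y ∈ rowSeg r ρ j → q ∈ rowSeg r ρ j → y < q → u y < u q) :
    (((rowSeg r ρ j).image u).filter (fun z => z < u p)).card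
      = ((rowSeg r ρ j).filter (fun y => y < p)).card := by
  symm
  refine Finset.card_bij (fun y _ => u y) ?_ ?_ ?_
  · intro y hy
    simp only [Finset.mem_filter] at hy ⊢
    exact ⟨Finset.mem_image_of_mem u hy.1, hmono y p hy.1 hp hy.2⟩
  · intro y1 hy1 y2 hy2 h
    exact u.injective h
  · intro z hz
    simp only [Finset.mem_filter, Finset.mem_image] at hz
    obtain ⟨⟨q, hq, rfl⟩, hlt⟩ := hz
    refine ⟨q, ?_, rfl⟩
    simp only [Finset.mem_filter]
    refine ⟨hq, ?_⟩
    rcases lt_trichotomy q p with h | h | h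
    · exact h
    · subst h; exact absurd hlt (lt_irrefl _)
    · exact absurd (hmono p q hp hq h) (not_lt.mpr (le_of_lt hlt))

theorem sorted_unique {ν ρ : Fin N → ℕ} (hν : ∑ i, ν i = r) (hρ : ∑ i, ρ i = r)
    {w w' : Equiv.Perm (Fin r)} (hw : SortedW r ν ρ w) (hw' : SortedW r ν ρ w')
    (hM : cosetMatrix r ν w ρ = cosetMatrix r ν w' ρ) : w = w' := by
  apply Equiv.ext
  intro p
  set j := segIdx hρ p with hj
  have hp : p ∈ rowSeg r ρ j := segIdx_spec hρ p
  have hIm : (rowSeg r ρ j).image w = (rowSeg r ρ j).image w' := by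
    ext x
    have hxi : x ∈ rowSeg r ν (segIdx hν x) := segIdx_spec hν x
    rw [window hν hρ hw hxi, window hν hρ hw' hxi, hM]
  have h1 := rank_image hp (fun y q hy hq h => hw.1 j y q hy hq h)
  have h2 := rank_image hp (fun y q hy hq h => hw'.1 j y q hy hq h)
  have hwp : w p ∈ (rowSeg r ρ j).image w := Finset.mem_image_of_mem w hp
  have hwp' : w' p ∈ (rowSeg r ρ j).image w := by
    rw [hIm]; exact Finset.mem_image_of_mem w' hp
  apply rank_inj hwp hwp'
  rw [h1, hIm]
  exact h2.symm

end DCoset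

namespace DCoset

variable {N r : ℕ}

noncomputable def decodeJ (A : Matrix (Fin N) (Fin N) ℕ) (hρr : ∑ j, (∑ i, A i j) = r)
    (p : Fin r) : Fin N :=
  blockIdx (fun j => ∑ i, A i j) (show (p : ℕ) < ∑ j, ∑ i, A i j from hρr ▸ p.isLt)

theorem decodeJ_spec (A : Matrix (Fin N) (Fin N) ℕ) (hρr : ∑ j, (∑ i, A i j) = r)
    (p : Fin r) :
    partialSum (fun j => ∑ i, A i j) (decodeJ A hρr p) ≤ (p : ℕ) ∧
    (p : ℕ) < partialSum (fun j => ∑ i, A i j) (decodeJ A hρr p) + ∑ i, A i (decodeJ A hρr p) :=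
  blockIdx_spec _ _

noncomputable def decodeI (A : Matrix (Fin N) (Fin N) ℕ) (hρr : ∑ j, (∑ i, A i j) = r)
    (p : Fin r) : Fin N :=
  blockIdx (fun i => A i (decodeJ A hρr p))
    (show (p : ℕ) - partialSum (fun j => ∑ i, A i j) (decodeJ A hρr p)
        < ∑ i, A i (decodeJ A hρr p) from by
      have := decodeJ_spec A hρr p
      omega)

theorem decodeI_spec (A : Matrix (Fin N) (Fin N) ℕ) (hρr : ∑ j, (∑ i, A i j) = r)
    (p : Fin r) :
    partialSum (fun i => A i (decodeJ A hρr p)) (decodeI A hρr p)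
      ≤ (p : ℕ) - partialSum (fun j => ∑ i, A i j) (decodeJ A hρr p) ∧
    (p : ℕ) - partialSum (fun j => ∑ i, A i j) (decodeJ A hρr p)
      < partialSum (fun i => A i (decodeJ A hρr p)) (decodeI A hρr p)
        + A (decodeI A hρr p) (decodeJ A hρr p) :=
  blockIdx_spec _ _

noncomputable def buildT (A : Matrix (Fin N) (Fin N) ℕ) (hρr : ∑ j, (∑ i, A i j) = r)
    (p : Fin r) : ℕ :=
  (p : ℕ) - partialSum (fun j => ∑ i, A i j) (decodeJ A hρr p)
    - partialSum (fun i => A i (decodeJ A hρr p)) (decodeI A hρr p)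

theorem buildT_lt (A : Matrix (Fin N) (Fin N) ℕ) (hρr : ∑ j, (∑ i, A i j) = r) (p : Fin r) :
    buildT A hρr p < A (decodeI A hρr p) (decodeJ A hρr p) := by
  have h1 := decodeI_spec A hρr p
  rw [buildT]
  omega

theorem buildP_eq (A : Matrix (Fin N) (Fin N) ℕ) (hρr : ∑ j, (∑ i, A i j) = r) (p : Fin r) :
    (p : ℕ) = partialSum (fun j => ∑ i, A i j) (decodeJ A hρr p)
      + partialSum (fun i => A i (decodeJ A hρr p)) (decodeI A hρr p) + buildT A hρr p := by
  have h1 := decodeJ_spec A hρr p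
  have h2 := decodeI_spec A hρr p
  rw [buildT]
  omega

noncomputable def buildFun (A : Matrix (Fin N) (Fin N) ℕ) (hρr : ∑ j, (∑ i, A i j) = r)
    (hνr : ∑ i, ∑ j, A i j = r) (p : Fin r) : Fin r :=
  ⟨partialSum (fun i => ∑ j, A i j) (decodeI A hρr p)
      + partialSum (fun j => A (decodeI A hρr p) j) (decodeJ A hρr p) + buildT A hρr p, by
    have h1 := buildT_lt A hρr p
    have h2 := ps_add_le_total (μ := fun j => A (decodeI A hρr p) j) (decodeJ A hρr p)
    have h3 := ps_add_le_total (μ := fun i => ∑ j, A i j) (decodeI A hρr p)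
    rw [hνr] at h3
    omega⟩

theorem buildFun_val (A : Matrix (Fin N) (Fin N) ℕ) (hρr : ∑ j, (∑ i, A i j) = r)
    (hνr : ∑ i, ∑ j, A i j = r) (p : Fin r) :
    (buildFun A hρr hνr p : ℕ) = partialSum (fun i => ∑ j, A i j) (decodeI A hρr p)
      + partialSum (fun j => A (decodeI A hρr p) j) (decodeJ A hρr p) + buildT A hρr p := rfl

theorem buildFun_mem (A : Matrix (Fin N) (Fin N) ℕ) (hρr : ∑ j, (∑ i, A i j) = r)
    (hνr : ∑ i, ∑ j, A i j = r) (p : Fin r) :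
    partialSum (fun i => ∑ j, A i j) (decodeI A hρr p) ≤ (buildFun A hρr hνr p : ℕ) ∧
    (buildFun A hρr hνr p : ℕ) < partialSum (fun i => ∑ j, A i j) (decodeI A hρr p)
      + ∑ j, A (decodeI A hρr p) j := by
  rw [buildFun_val]
  have h1 := buildT_lt A hρr p
  have h2 := ps_add_le_total (μ := fun j => A (decodeI A hρr p) j) (decodeJ A hρr p)
  beta_reduce at h2
  omega

theorem buildFun_inj (A : Matrix (Fin N) (Fin N) ℕ) (hρr : ∑ j, (∑ i, A i j) = r)
    (hνr : ∑ i, ∑ j, A i j = r) : Function.Injective (buildFun A hρr hνr) := by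
  intro p p' h
  have hm1 := buildFun_mem A hρr hνr p
  have hm2 := buildFun_mem A hρr hνr p'
  rw [← h] at hm2
  have hieq : decodeI A hρr p = decodeI A hρr p' :=
    block_unique (μ := fun i => ∑ j, A i j) hm1.1 hm1.2 hm2.1 hm2.2
  have hval : (buildFun A hρr hνr p : ℕ) = (buildFun A hρr hνr p' : ℕ) := by rw [h]
  rw [buildFun_val, buildFun_val, ← hieq] at hval
  have hinner : partialSum (fun j => A (decodeI A hρr p) j) (decodeJ A hρr p) + buildT A hρr p
      = partialSum (fun j => A (decodeI A hρr p) j) (decodeJ A hρr p') + buildT A hρr p' := by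
    omega
  have ht := buildT_lt A hρr p
  have ht' := buildT_lt A hρr p'
  rw [← hieq] at ht'
  have hjeq : decodeJ A hρr p = decodeJ A hρr p' :=
    block_unique (μ := fun j => A (decodeI A hρr p) j)
      (s := partialSum (fun j => A (decodeI A hρr p) j) (decodeJ A hρr p) + buildT A hρr p)
      (by beta_reduce; omega) (by beta_reduce; omega)
      (by beta_reduce; omega) (by beta_reduce; omega)
  have hteq : buildT A hρr p = buildT A hρr p' := by
    rw [hjeq] at hinner
    omega
  apply Fin.ext
  rw [buildP_eq A hρr p, buildP_eq A hρr p', hieq, hjeq, hteq]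

noncomputable def buildPerm (A : Matrix (Fin N) (Fin N) ℕ) (hρr : ∑ j, (∑ i, A i j) = r)
    (hνr : ∑ i, ∑ j, A i j = r) : Equiv.Perm (Fin r) :=
  Equiv.ofBijective (buildFun A hρr hνr)
    (Finite.injective_iff_bijective.mp (buildFun_inj A hρr hνr))

theorem buildPerm_matrix (A : Matrix (Fin N) (Fin N) ℕ) (hρr : ∑ j, (∑ i, A i j) = r)
    (hνr : ∑ i, ∑ j, A i j = r) :
    cosetMatrix r (fun i => ∑ j, A i j) (buildPerm A hρr hνr) (fun j => ∑ i, A i j) = A := by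
  funext i0 j0
  rw [cosetMatrix_eq_filter_card]
  have hkey : (rowSeg r (fun j => ∑ i, A i j) j0).filter
      (fun p => buildPerm A hρr hνr p ∈ rowSeg r (fun i => ∑ j, A i j) i0)
      = Finset.univ.filter (fun p : Fin r =>
          partialSum (fun j => ∑ i, A i j) j0 + partialSum (fun i => A i j0) i0 ≤ (p : ℕ) ∧
          (p : ℕ) < partialSum (fun j => ∑ i, A i j) j0 + partialSum (fun i => A i j0) i0
            + A i0 j0) := by
    ext p
    have hj := decodeJ_spec A hρr p
    have hi := decodeI_spec A hρr p
    have ht := buildT_lt A hρr p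
    have hpeq := buildP_eq A hρr p
    have hfm := buildFun_mem A hρr hνr p
    have happ : buildPerm A hρr hνr p = buildFun A hρr hνr p := rfl
    simp only [Finset.mem_filter, mem_rowSeg, Finset.mem_univ, true_and, happ]
    constructor
    · rintro ⟨hpmem, hwmem⟩
      have hjeq : decodeJ A hρr p = j0 :=
        block_unique (μ := fun j => ∑ i, A i j) (s := (p : ℕ))
          hj.1 hj.2 hpmem.1 hpmem.2
      have hieq : decodeI A hρr p = i0 :=
        block_unique (μ := fun i => ∑ j, A i j) (s := (buildFun A hρr hνr p : ℕ))
          hfm.1 hfm.2 hwmem.1 hwmem.2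
      rw [hjeq, hieq] at hpeq ht
      omega
    · intro hwin
      have hps1 : partialSum (fun i => A i j0) i0 + A i0 j0 ≤ ∑ i, A i j0 :=
        ps_add_le_total (μ := fun i => A i j0) i0
      have hpmem : partialSum (fun j => ∑ i, A i j) j0 ≤ (p : ℕ) ∧
          (p : ℕ) < partialSum (fun j => ∑ i, A i j) j0 + ∑ i, A i j0 := by omega
      have hjeq : decodeJ A hρr p = j0 :=
        block_unique (μ := fun j => ∑ i, A i j) (s := (p : ℕ))
          hj.1 hj.2 hpmem.1 hpmem.2
      rw [hjeq] at hi hpeq ht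
      have hieq : decodeI A hρr p = i0 :=
        block_unique (μ := fun i => A i j0)
          (s := (p : ℕ) - partialSum (fun j => ∑ i, A i j) j0)
          hi.1 hi.2 (by beta_reduce; omega) (by beta_reduce; omega)
      refine ⟨⟨hpmem.1, hpmem.2⟩, ?_⟩
      rw [buildFun_val, hjeq, hieq]
      rw [hieq] at ht
      have hps2 : partialSum (fun j => A i0 j) j0 + A i0 j0 ≤ ∑ j, A i0 j :=
        ps_add_le_total (μ := fun j => A i0 j) j0
      constructor
      · omega
      · omega
  rw [hkey]
  have hbound : partialSum (fun j => ∑ i, A i j) j0 + partialSum (fun i => A i j0) i0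
      + A i0 j0 ≤ r := by
    have h1 := ps_add_le_total (μ := fun i => A i j0) i0
    have h2 := ps_add_le_total (μ := fun j => ∑ i, A i j) j0
    beta_reduce at h1 h2
    omega
  exact card_interval hbound

end DCoset

namespace DCoset

variable {N r : ℕ}

theorem triple_sorted {t : (Fin N → ℕ) × Equiv.Perm (Fin r) × (Fin N → ℕ)}
    (ht : t ∈ tripleSet N r) : SortedW r t.1 t.2.2 t.2.1 :=
  sorted_of_minimal ht.2.2

theorem exists_minimal_triple (A : Matrix (Fin N) (Fin N) ℕ)
    (hA : ∑ i, ∑ j, A i j = r) :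
    ∃ t ∈ tripleSet N r, cosetMatrix r t.1 t.2.1 t.2.2 = A := by
  classical
  have hρr : ∑ j, (∑ i, A i j) = r := by rw [Finset.sum_comm]; exact hA
  set νf : Fin N → ℕ := fun i => ∑ j, A i j with hνf
  set ρf : Fin N → ℕ := fun j => ∑ i, A i j with hρf
  set u := buildPerm A hρr hA with hu
  have humat : cosetMatrix r νf u ρf = A := buildPerm_matrix A hρr hA
  set P : ℕ → Prop := fun n => ∃ a ∈ youngSubgroupF r νf, ∃ b ∈ youngSubgroupF r ρf,
    invLen (a * u * b) = n with hP
  have hPex : ∃ n, P n := ⟨invLen u, 1, one_mem _, 1, one_mem _, by rw [one_mul, mul_one]⟩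
  obtain ⟨a₀, ha₀, b₀, hb₀, hw₀⟩ := Nat.find_spec hPex
  refine ⟨(νf, a₀ * u * b₀, ρf), ⟨hA, hρr, ?_⟩, ?_⟩
  · intro a ha b hb
    have hassoc : a * (a₀ * u * b₀) * b = (a * a₀) * u * (b₀ * b) := by group
    have hPm : P (invLen (a * (a₀ * u * b₀) * b)) := by
      rw [hassoc]
      exact ⟨a * a₀, mul_mem ha ha₀, b₀ * b, mul_mem hb₀ hb, rfl⟩
    calc invLen (a₀ * u * b₀) = Nat.find hPex := hw₀
      _ ≤ _ := Nat.find_min' hPex hPm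
  · show cosetMatrix r νf (a₀ * u * b₀) ρf = A
    rw [cosetMatrix_invariant ha₀ hb₀, humat]

end DCoset

open DCoset in
/-- The map `(ν, w, ρ) ↦ (|R_i^ν ∩ w R_j^ρ|)_{ij}` is a bijection from triples
(compositions `ν, ρ` of `r` with `N` parts, `w` a minimal double coset representative)
onto `M(N,r)`, the `N×N` matrices over `ℕ` with entry sum `r`; moreover the row sums of
the image matrix are `ν` and the column sums are `ρ`. -/
theorem stmt3 (N r : ℕ) :
    Set.BijOn
      (fun t : (Fin N → ℕ) × Equiv.Perm (Fin r) × (Fin N → ℕ) =>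
        cosetMatrix r t.1 t.2.1 t.2.2)
      (tripleSet N r)
      {A : Matrix (Fin N) (Fin N) ℕ | ∑ i, ∑ j, A i j = r}
    ∧ ∀ t ∈ tripleSet N r,
        (∀ i, ∑ j, cosetMatrix r t.1 t.2.1 t.2.2 i j = t.1 i) ∧
        (∀ j, ∑ i, cosetMatrix r t.1 t.2.1 t.2.2 i j = t.2.2 j) := by
  have hsums : ∀ t ∈ tripleSet N r,
      (∀ i, ∑ j, cosetMatrix r t.1 t.2.1 t.2.2 i j = t.1 i) ∧
      (∀ j, ∑ i, cosetMatrix r t.1 t.2.1 t.2.2 i j = t.2.2 j) := by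
    intro t ht
    obtain ⟨hν, hρ, _⟩ := ht
    exact ⟨row_sums hρ hν t.2.1, col_sums hρ hν t.2.1⟩
  refine ⟨⟨?_, ?_, ?_⟩, hsums⟩
  · -- MapsTo
    intro t ht
    obtain ⟨hν, hρ, _⟩ := ht
    show ∑ i, ∑ j, cosetMatrix r t.1 t.2.1 t.2.2 i j = r
    calc ∑ i, ∑ j, cosetMatrix r t.1 t.2.1 t.2.2 i j
        = ∑ i, t.1 i := Finset.sum_congr rfl (fun i _ => row_sums hρ hν t.2.1 i)
      _ = r := hν
  · -- InjOn
    rintro ⟨ν, w, ρ⟩ ht ⟨ν', w', ρ'⟩ ht' heq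
    simp only at heq
    have hs := triple_sorted ht
    have hs' := triple_sorted ht'
    simp only at hs hs'
    obtain ⟨hν, hρ, _⟩ := ht
    obtain ⟨hν', hρ', _⟩ := ht'
    simp only at hν hρ hν' hρ'
    have hνeq : ν = ν' := by
      funext i
      rw [← row_sums hρ hν w i, ← row_sums hρ' hν' w' i, heq]
    have hρeq : ρ = ρ' := by
      funext j
      rw [← col_sums hρ hν w j, ← col_sums hρ' hν' w' j, heq]
    subst hνeq
    subst hρeq
    have hweq : w = w' := sorted_unique hν hρ hs hs' heq
    rw [hweq]
  · -- SurjOn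
    intro A hA
    obtain ⟨t, ht, hmat⟩ := exists_minimal_triple A hA
    exact ⟨t, ht, hmat⟩
end

section
/- Let λ|μ and ξ|η be pairs of compositions with λ∨μ and ξ∨η compositions of r, and let d be a minimal-length representative of the double coset S_{λ|μ} d S_{ξ|η}. Then the following are equivalent: (1) the double coset contains an element x with sx < x, tx > x for all simple reflections s ∈ λ, t ∈ μ and xs < x, xt > x for all s ∈ ξ, t ∈ η; (2) S_{λ*} ∩ d S_{*η} d^{-1} = {1} and S_{*μ} ∩ d S_{ξ*} d^{-1} = {1}, where λ* = λ∨(1^{r-|λ|}) and *μ = (1^{r-|μ|})∨μ. -/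
/-- The index of the block (part) of the composition `c` containing the position `i`
(positions are `0`-based). -/
def blockIdx (c : List ℕ) (i : ℕ) : ℕ :=
  ((List.range c.length).filter (fun j => (c.take (j + 1)).sum ≤ i)).length

/-- The Young subgroup of `S_r` associated to a composition `c` of `r`: permutations
preserving each block of the composition. -/
def youngSubgroup (r : ℕ) (c : List ℕ) : Subgroup (Equiv.Perm (Fin r)) where
  carrier := {w | ∀ i : Fin r, blockIdx c ((w i : Fin r) : ℕ) = blockIdx c (i : ℕ)}
  one_mem' := fun _ => rfl
  mul_mem' := by
    intro a b ha hb i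
    have : (a * b) i = a (b i) := rfl
    rw [this, ha (b i), hb i]
  inv_mem' := by
    intro a ha i
    have h := ha (a⁻¹ i)
    simpa using h.symm

/-- A basic transposition of `S_r`. -/
def isSimple {r : ℕ} (s : Equiv.Perm (Fin r)) : Prop :=
  ∃ (k : ℕ) (hk : k + 1 < r),
    s = Equiv.swap (⟨k, Nat.lt_of_succ_lt hk⟩ : Fin r) (⟨k + 1, hk⟩ : Fin r)

/-- `sameBlock c k` says that positions `k` and `k+1` lie in the same block of the
composition `c`, i.e. the basic transposition `s_k` is a simple reflection of `S_c`. -/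
def sameBlock (c : List ℕ) (k : ℕ) : Prop := blockIdx c k = blockIdx c (k + 1)

/-- The basic transposition `s_k = (k, k+1)` of `S_r`. -/
def sw (r k : ℕ) (hk : k + 1 < r) : Equiv.Perm (Fin r) :=
  Equiv.swap (⟨k, Nat.lt_of_succ_lt hk⟩ : Fin r) (⟨k + 1, hk⟩ : Fin r)

/-- `λ* = λ ∨ (1^{r-|λ|})`. -/
def padRight (r : ℕ) (lam : List ℕ) : List ℕ := lam ++ List.replicate (r - lam.sum) 1

/-- `*μ = (1^{r-|μ|}) ∨ μ`. -/
def padLeft (r : ℕ) (mu : List ℕ) : List ℕ := List.replicate (r - mu.sum) 1 ++ mu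



lemma blockIdx_eq_card (c : List ℕ) (i : ℕ) :
    blockIdx c i = ((Finset.range c.length).filter (fun j => (c.take (j + 1)).sum ≤ i)).card := by
  rfl

lemma take_sum_le (c : List ℕ) (n : ℕ) : (c.take n).sum ≤ c.sum := by
  conv_rhs => rw [← List.take_append_drop n c]
  rw [List.sum_append]; omega

lemma take_sum_mono (c : List ℕ) {m n : ℕ} (h : m ≤ n) : (c.take m).sum ≤ (c.take n).sum := by
  have : (c.take n).take m = c.take m := by rw [List.take_take, min_eq_left h]
  calc (c.take m).sum = ((c.take n).take m).sum := by rw [this]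
    _ ≤ (c.take n).sum := take_sum_le _ _

lemma blockIdx_mono (c : List ℕ) {i j : ℕ} (h : i ≤ j) : blockIdx c i ≤ blockIdx c j := by
  rw [blockIdx_eq_card, blockIdx_eq_card]
  apply Finset.card_le_card
  intro k hk
  simp only [Finset.mem_filter] at *
  exact ⟨hk.1, hk.2.trans h⟩

lemma blockIdx_lt_length (c : List ℕ) {i : ℕ} (h : i < c.sum) : blockIdx c i < c.length := by
  rw [blockIdx_eq_card]
  have hne : c.length ≠ 0 := by
    intro h0; rw [List.length_eq_zero_iff] at h0; subst h0; simp at h; 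
  have hmem : c.length - 1 ∈ Finset.range c.length := by
    simp; omega
  have hnot : c.length - 1 ∉ (Finset.range c.length).filter (fun j => (c.take (j + 1)).sum ≤ i) := by
    simp only [Finset.mem_filter, not_and]
    intro _
    have : c.length - 1 + 1 = c.length := by omega
    rw [this, List.take_length]; omega
  calc _ < (Finset.range c.length).card :=
        Finset.card_lt_card ⟨Finset.filter_subset _ _, fun hsub => hnot (hsub hmem)⟩
    _ = c.length := Finset.card_range _

lemma blockIdx_of_ge (c : List ℕ) {i : ℕ} (h : c.sum ≤ i) : blockIdx c i = c.length := by
  rw [blockIdx_eq_card]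
  rw [Finset.filter_true_of_mem, Finset.card_range]
  intro j _
  exact le_trans (take_sum_le c _) h

lemma take_blockIdx_sum_le (c : List ℕ) (i : ℕ) : (c.take (blockIdx c i)).sum ≤ i := by
  set S := (Finset.range c.length).filter (fun j => (c.take (j + 1)).sum ≤ i) with hS
  have hb : blockIdx c i = S.card := blockIdx_eq_card c i
  rcases Nat.eq_zero_or_pos (blockIdx c i) with h0 | hpos
  · simp [h0]
  · have : ∃ j ∈ S, S.card - 1 ≤ j := by
      by_contra hcon
      push_neg at hcon
      have : S ⊆ Finset.range (S.card - 1) := fun j hj => Finset.mem_range.2 (hcon j hj)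
      have := Finset.card_le_card this
      rw [Finset.card_range] at this
      omega
    obtain ⟨j, hj, hjge⟩ := this
    simp only [hS, Finset.mem_filter] at hj
    exact le_trans (take_sum_mono c (by omega)) hj.2

lemma lt_take_blockIdx_succ_sum (c : List ℕ) {i : ℕ} (h : i < c.sum) :
    i < (c.take (blockIdx c i + 1)).sum := by
  by_contra hcon
  push_neg at hcon
  set S := (Finset.range c.length).filter (fun j => (c.take (j + 1)).sum ≤ i) with hS
  have hb : blockIdx c i = S.card := blockIdx_eq_card c i
  have hlt := blockIdx_lt_length c h
  have hsub : Finset.range (blockIdx c i + 1) ⊆ S := by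
    intro j hj
    simp only [Finset.mem_range] at hj
    simp only [hS, Finset.mem_filter, Finset.mem_range]
    exact ⟨by omega, le_trans (take_sum_mono c (by omega)) hcon⟩
  have := Finset.card_le_card hsub
  rw [Finset.card_range] at this
  omega

lemma blockIdx_eq_of_bounds (c : List ℕ) {n i : ℕ}
    (hl : (c.take n).sum ≤ i) (hr : i < (c.take (n + 1)).sum) : blockIdx c i = n := by
  have hn : n < c.length := by
    by_contra hcon
    push_neg at hcon
    rw [List.take_of_length_le hcon, List.take_of_length_le (by omega)] at *
    omega
  rw [blockIdx_eq_card]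
  have : (Finset.range c.length).filter (fun j => (c.take (j + 1)).sum ≤ i) = Finset.range n := by
    ext j
    simp only [Finset.mem_filter, Finset.mem_range]
    constructor
    · rintro ⟨hj, hj2⟩
      by_contra hcon
      push_neg at hcon
      have := le_trans (take_sum_mono c (show n + 1 ≤ j + 1 by omega)) hj2
      omega
    · intro hj
      exact ⟨by omega, le_trans (take_sum_mono c (by omega)) hl⟩
  rw [this, Finset.card_range]

lemma blockIdx_squeeze (c : List ℕ) {i m j : ℕ} (h1 : i ≤ m) (h2 : m ≤ j)
    (h : blockIdx c i = blockIdx c j) : blockIdx c m = blockIdx c i := by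
  have a1 := blockIdx_mono c h1
  have a2 := blockIdx_mono c h2
  omega
-- Section 2: append / replicate structure
lemma take_append_sum (c1 c2 : List ℕ) {n : ℕ} (h : n ≤ c1.length) :
    ((c1 ++ c2).take n).sum = (c1.take n).sum := by
  rw [List.take_append_of_le_length h]

lemma take_append_sum' (c1 c2 : List ℕ) (t : ℕ) :
    ((c1 ++ c2).take (c1.length + t)).sum = c1.sum + (c2.take t).sum := by
  rw [List.take_append, List.sum_append, List.take_of_length_le (Nat.le_add_right _ _), Nat.add_sub_cancel_left]

lemma blockIdx_append_left {c1 : List ℕ} (c2 : List ℕ) {i : ℕ} (h : i < c1.sum) :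
    blockIdx (c1 ++ c2) i = blockIdx c1 i := by
  have hb := blockIdx_lt_length c1 h
  have h1 := take_blockIdx_sum_le c1 i
  have h2 := lt_take_blockIdx_succ_sum c1 h
  apply blockIdx_eq_of_bounds
  · rw [take_append_sum c1 c2 (by omega)]; exact h1
  · rw [take_append_sum c1 c2 (by omega)]; exact h2

lemma blockIdx_append_right {c1 : List ℕ} (c2 : List ℕ) {i : ℕ} (h : c1.sum ≤ i)
    (h2 : i < c1.sum + c2.sum) :
    blockIdx (c1 ++ c2) i = c1.length + blockIdx c2 (i - c1.sum) := by
  have hi2 : i - c1.sum < c2.sum := by omega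
  have hb := blockIdx_lt_length c2 hi2
  have ha := take_blockIdx_sum_le c2 (i - c1.sum)
  have hc := lt_take_blockIdx_succ_sum c2 hi2
  apply blockIdx_eq_of_bounds
  · rw [take_append_sum' c1 c2]; omega
  · have : c1.length + blockIdx c2 (i - c1.sum) + 1 = c1.length + (blockIdx c2 (i - c1.sum) + 1) := by omega
    rw [this, take_append_sum' c1 c2]; omega

lemma blockIdx_replicate_one (m : ℕ) {i : ℕ} : blockIdx (List.replicate m 1) i = min i m := by
  rcases le_or_gt m i with h | h
  · rw [blockIdx_of_ge _ (by simp; omega), List.length_replicate]; omega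
  · apply blockIdx_eq_of_bounds <;>
      simp [List.take_replicate, List.sum_replicate] <;> omega

-- the "P" pattern: c ++ replicate m 1
lemma blockIdx_padR_of_ge {c : List ℕ} {m i : ℕ} (h : c.sum ≤ i) (h2 : i < c.sum + m) :
    blockIdx (c ++ List.replicate m 1) i = c.length + (i - c.sum) := by
  rw [blockIdx_append_right _ h (by simp; omega), blockIdx_replicate_one]
  omega

lemma blockIdx_lt_length_iff {c1 c2 : List ℕ} {i : ℕ} (hi : i < c1.sum + c2.sum) :
    blockIdx (c1 ++ c2) i < c1.length ↔ i < c1.sum := by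
  constructor
  · intro h
    by_contra hcon
    push_neg at hcon
    rw [blockIdx_append_right c2 hcon hi] at h
    omega
  · intro h
    rw [blockIdx_append_left c2 h]
    exact blockIdx_lt_length c1 h

/-- In `c ++ 1^m`, two distinct positions in the same block are both in the `c`-part,
and lie in the same `c`-block. -/
lemma padR_same_block {c : List ℕ} {m i i' : ℕ} (hne : i ≠ i')
    (hi : i < c.sum + m) (hi' : i' < c.sum + m)
    (h : blockIdx (c ++ List.replicate m 1) i = blockIdx (c ++ List.replicate m 1) i') :
    i < c.sum ∧ i' < c.sum ∧ blockIdx c i = blockIdx c i' := by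
  have hsum : (List.replicate m 1 : List ℕ).sum = m := by simp
  rcases lt_or_ge i c.sum with h1 | h1 <;> rcases lt_or_ge i' c.sum with h2 | h2
  · rw [blockIdx_append_left _ h1, blockIdx_append_left _ h2] at h
    exact ⟨h1, h2, h⟩
  · exfalso
    rw [blockIdx_append_left _ h1, blockIdx_padR_of_ge h2 hi'] at h
    have := blockIdx_lt_length c h1
    omega
  · exfalso
    rw [blockIdx_append_left _ h2, blockIdx_padR_of_ge h1 hi] at h
    have := blockIdx_lt_length c h2
    omega
  · exfalso
    rw [blockIdx_padR_of_ge h1 hi, blockIdx_padR_of_ge h2 hi'] at h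
    omega

lemma blockIdx_padL_of_ge {c : List ℕ} {m i : ℕ} (h : m ≤ i) (h2 : i < m + c.sum) :
    blockIdx (List.replicate m 1 ++ c) i = m + blockIdx c (i - m) := by
  have hsum : (List.replicate m 1 : List ℕ).sum = m := by simp
  rw [blockIdx_append_right c (by omega) (by omega), hsum, List.length_replicate]

lemma blockIdx_padL_of_lt {c : List ℕ} {m i : ℕ} (h : i < m) :
    blockIdx (List.replicate m 1 ++ c) i = i := by
  have hsum : (List.replicate m 1 : List ℕ).sum = m := by simp
  rw [blockIdx_append_left c (by omega), blockIdx_replicate_one]; omega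

/-- In `1^m ++ c`, two distinct positions in the same block are both in the `c`-part. -/
lemma padL_same_block {c : List ℕ} {m i i' : ℕ} (hne : i ≠ i')
    (hi : i < m + c.sum) (hi' : i' < m + c.sum)
    (h : blockIdx (List.replicate m 1 ++ c) i = blockIdx (List.replicate m 1 ++ c) i') :
    m ≤ i ∧ m ≤ i' ∧ blockIdx c (i - m) = blockIdx c (i' - m) := by
  rcases lt_or_ge i m with h1 | h1 <;> rcases lt_or_ge i' m with h2 | h2
  · rw [blockIdx_padL_of_lt h1, blockIdx_padL_of_lt h2] at h; omega
  · rw [blockIdx_padL_of_lt h1, blockIdx_padL_of_ge h2 hi'] at h; omega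
  · rw [blockIdx_padL_of_lt h2, blockIdx_padL_of_ge h1 hi] at h; omega
  · rw [blockIdx_padL_of_ge h1 hi, blockIdx_padL_of_ge h2 hi'] at h
    exact ⟨h1, h2, by omega⟩
-- Section 3: invLen lemmas
lemma invLen_inv {r : ℕ} (w : Equiv.Perm (Fin r)) : invLen w⁻¹ = invLen w := by
  unfold invLen
  apply Finset.card_bij' (fun p _ => (w⁻¹ p.2, w⁻¹ p.1)) (fun q _ => (w q.2, w q.1))
  · intro p hp
    simp only [Finset.mem_filter, Finset.mem_univ, true_and] at *
    exact ⟨hp.2, by simpa using hp.1⟩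
  · intro q hq
    simp only [Finset.mem_filter, Finset.mem_univ, true_and] at *
    exact ⟨hq.2, by simpa using hq.1⟩
  · intro p _; simp
  · intro q _; simp

lemma sw_lt_iff {r k : ℕ} (hk : k + 1 < r) {a b : Fin r} (hab : a < b) :
    sw r k hk b < sw r k hk a ↔
      a = (⟨k, Nat.lt_of_succ_lt hk⟩ : Fin r) ∧ b = (⟨k + 1, hk⟩ : Fin r) := by
  set K : Fin r := ⟨k, Nat.lt_of_succ_lt hk⟩ with hK
  set K1 : Fin r := ⟨k + 1, hk⟩ with hK1
  have hKK1 : (K : ℕ) = k ∧ (K1 : ℕ) = k + 1 := ⟨rfl, rfl⟩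
  have habv : (a : ℕ) < (b : ℕ) := hab
  by_cases ha : a = K
  · by_cases hb : b = K1
    · subst ha; subst hb
      simp only [sw, Equiv.swap_apply_left, Equiv.swap_apply_right, and_self, iff_true]
      simp only [hK, hK1, Equiv.swap_apply_left, Equiv.swap_apply_right]
      exact hab
    · subst ha
      have hbv : k + 1 < (b : ℕ) := by
        rcases Nat.lt_or_ge (b : ℕ) (k + 2) with h | h
        · exfalso; apply hb; apply Fin.ext; omega
        · omega
      have hbK : b ≠ K := by intro h; subst h; omega
      have hbK1 : b ≠ K1 := hb
      rw [sw, Equiv.swap_apply_left, Equiv.swap_apply_of_ne_of_ne hbK hbK1]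
      simp only [hb, and_false, iff_false, not_lt]
      exact le_of_lt (by show (K1 : ℕ) < (b : ℕ); omega)
  · have hav : (a : ℕ) ≠ k := fun h => ha (Fin.ext h)
    have haK1 : a ≠ K1 → True := fun _ => trivial
    by_cases ha1 : a = K1
    · subst ha1
      have hbK : b ≠ K := by intro h; subst h; omega
      have hbK1 : b ≠ K1 := by intro h; subst h; omega
      rw [sw, Equiv.swap_apply_right, Equiv.swap_apply_of_ne_of_ne hbK hbK1]
      simp only [ha, false_and, iff_false, not_lt]
      exact le_of_lt (by show (K : ℕ) < (b : ℕ); omega)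
    · rw [sw, Equiv.swap_apply_of_ne_of_ne ha ha1]
      by_cases hb : b = K
      · subst hb
        have : (a : ℕ) < k := by
          have : (a : ℕ) ≠ k + 1 := fun h => ha1 (Fin.ext h)
          omega
        rw [Equiv.swap_apply_left]
        simp only [ha, false_and, iff_false, not_lt]
        exact le_of_lt (by show (a : ℕ) < (K1 : ℕ); omega)
      · by_cases hb1 : b = K1
        · subst hb1
          have : (a : ℕ) < k := by
            have h2 : (a : ℕ) ≠ k + 1 := fun h => ha1 (Fin.ext h)
            omega
          rw [Equiv.swap_apply_right]
          simp only [ha, false_and, iff_false, not_lt]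
          exact le_of_lt (by show (a : ℕ) < (K : ℕ); omega)
        · rw [Equiv.swap_apply_of_ne_of_ne hb hb1]
          simp only [ha, false_and, iff_false, not_lt]
          exact le_of_lt hab

lemma invLen_sw_mul {r k : ℕ} (hk : k + 1 < r) (w : Equiv.Perm (Fin r))
    (h : w⁻¹ (⟨k, Nat.lt_of_succ_lt hk⟩ : Fin r) < w⁻¹ (⟨k + 1, hk⟩ : Fin r)) :
    invLen (sw r k hk * w) = invLen w + 1 := by
  set K : Fin r := ⟨k, Nat.lt_of_succ_lt hk⟩ with hK
  set K1 : Fin r := ⟨k + 1, hk⟩ with hK1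
  have hKlt : K < K1 := by show (K : ℕ) < (K1 : ℕ); simp [hK, hK1]
  unfold invLen
  have hset : (Finset.univ.filter (fun p : Fin r × Fin r =>
      p.1 < p.2 ∧ (sw r k hk * w) p.2 < (sw r k hk * w) p.1)) =
      insert (w⁻¹ K, w⁻¹ K1)
        (Finset.univ.filter (fun p : Fin r × Fin r => p.1 < p.2 ∧ w p.2 < w p.1)) := by
    ext p
    simp only [Finset.mem_filter, Finset.mem_univ, true_and, Finset.mem_insert]
    simp only [Equiv.Perm.mul_apply]
    constructor
    · rintro ⟨h12, hinv⟩
      rcases lt_trichotomy (w p.1) (w p.2) with hc | hc | hc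
      · left
        have := (sw_lt_iff hk hc).1 hinv
        have e1 : p.1 = w⁻¹ K := by rw [hK, ← this.1, Equiv.Perm.coe_inv, Equiv.symm_apply_apply]
        have e2 : p.2 = w⁻¹ K1 := by rw [hK1, ← this.2, Equiv.Perm.coe_inv, Equiv.symm_apply_apply]
        exact Prod.ext e1 e2
      · exact absurd (w.injective hc) (ne_of_lt h12)
      · exact Or.inr ⟨h12, hc⟩
    · rintro (hp | ⟨h12, hc⟩)
      · subst hp
        refine ⟨h, ?_⟩
        simp only [Equiv.Perm.coe_inv, Equiv.apply_symm_apply]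
        show sw r k hk K1 < sw r k hk K
        rw [sw, Equiv.swap_apply_left, Equiv.swap_apply_right]
        exact hKlt
      · refine ⟨h12, ?_⟩
        rcases lt_trichotomy (sw r k hk (w p.2)) (sw r k hk (w p.1)) with hd | hd | hd
        · exact hd
        · exact absurd ((sw r k hk).injective hd) (fun h' => lt_irrefl _ (h' ▸ hc))
        · exfalso
          have := (sw_lt_iff hk hc).1 hd
          have e1 : p.2 = w⁻¹ K := by rw [hK, ← this.1, Equiv.Perm.coe_inv, Equiv.symm_apply_apply]
          have e2 : p.1 = w⁻¹ K1 := by rw [hK1, ← this.2, Equiv.Perm.coe_inv, Equiv.symm_apply_apply]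
          rw [e1, e2] at h12
          exact absurd h (not_lt.2 (le_of_lt h12))
  rw [hset, Finset.card_insert_of_notMem]
  simp only [Finset.mem_filter, Finset.mem_univ, true_and, not_and]
  intro _
  simp only [Equiv.Perm.coe_inv, Equiv.apply_symm_apply, not_lt]
  exact le_of_lt hKlt

lemma sw_mul_sw {r k : ℕ} (hk : k + 1 < r) (w : Equiv.Perm (Fin r)) :
    sw r k hk * (sw r k hk * w) = w := by
  rw [← mul_assoc, sw, Equiv.swap_mul_self, one_mul]

lemma invLen_sw_mul' {r k : ℕ} (hk : k + 1 < r) (w : Equiv.Perm (Fin r))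
    (h : w⁻¹ (⟨k + 1, hk⟩ : Fin r) < w⁻¹ (⟨k, Nat.lt_of_succ_lt hk⟩ : Fin r)) :
    invLen w = invLen (sw r k hk * w) + 1 := by
  have h2 : (sw r k hk * w)⁻¹ (⟨k, Nat.lt_of_succ_lt hk⟩ : Fin r)
      < (sw r k hk * w)⁻¹ (⟨k + 1, hk⟩ : Fin r) := by
    simp only [mul_inv_rev, Equiv.Perm.mul_apply]
    have e1 : (sw r k hk)⁻¹ (⟨k, Nat.lt_of_succ_lt hk⟩ : Fin r) = (⟨k + 1, hk⟩ : Fin r) := by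
      rw [sw, Equiv.swap_inv, Equiv.swap_apply_left]
    have e2 : (sw r k hk)⁻¹ (⟨k + 1, hk⟩ : Fin r) = (⟨k, Nat.lt_of_succ_lt hk⟩ : Fin r) := by
      rw [sw, Equiv.swap_inv, Equiv.swap_apply_right]
    rw [e1, e2]
    exact h
  have := invLen_sw_mul hk (sw r k hk * w) h2
  rw [sw_mul_sw] at this
  omega

lemma sw_mul_lt_iff {r k : ℕ} (hk : k + 1 < r) (w : Equiv.Perm (Fin r)) :
    invLen (sw r k hk * w) < invLen w ↔
      w⁻¹ (⟨k + 1, hk⟩ : Fin r) < w⁻¹ (⟨k, Nat.lt_of_succ_lt hk⟩ : Fin r) := by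
  constructor
  · intro h
    rcases lt_trichotomy (w⁻¹ (⟨k + 1, hk⟩ : Fin r)) (w⁻¹ (⟨k, Nat.lt_of_succ_lt hk⟩ : Fin r))
      with hc | hc | hc
    · exact hc
    · exfalso
      have h3 : (⟨k + 1, hk⟩ : Fin r) = (⟨k, Nat.lt_of_succ_lt hk⟩ : Fin r) := w⁻¹.injective hc
      have h4 : k + 1 = k := congrArg Fin.val h3
      omega
    · have := invLen_sw_mul hk w hc
      omega
  · intro h
    have := invLen_sw_mul' hk w h
    omega

lemma lt_sw_mul_iff {r k : ℕ} (hk : k + 1 < r) (w : Equiv.Perm (Fin r)) :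
    invLen w < invLen (sw r k hk * w) ↔
      w⁻¹ (⟨k, Nat.lt_of_succ_lt hk⟩ : Fin r) < w⁻¹ (⟨k + 1, hk⟩ : Fin r) := by
  constructor
  · intro h
    rcases lt_trichotomy (w⁻¹ (⟨k, Nat.lt_of_succ_lt hk⟩ : Fin r)) (w⁻¹ (⟨k + 1, hk⟩ : Fin r))
      with hc | hc | hc
    · exact hc
    · exfalso
      have h3 : (⟨k, Nat.lt_of_succ_lt hk⟩ : Fin r) = (⟨k + 1, hk⟩ : Fin r) := w⁻¹.injective hc
      have h4 : k = k + 1 := congrArg Fin.val h3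
      omega
    · have := invLen_sw_mul' hk w hc
      omega
  · intro h
    have := invLen_sw_mul hk w h
    omega

lemma inv_sw_eq {r k : ℕ} (hk : k + 1 < r) (w : Equiv.Perm (Fin r)) :
    (w * sw r k hk)⁻¹ = sw r k hk * w⁻¹ := by
  rw [mul_inv_rev, sw, Equiv.swap_inv]

lemma mul_sw_lt_iff {r k : ℕ} (hk : k + 1 < r) (w : Equiv.Perm (Fin r)) :
    invLen (w * sw r k hk) < invLen w ↔
      w (⟨k + 1, hk⟩ : Fin r) < w (⟨k, Nat.lt_of_succ_lt hk⟩ : Fin r) := by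
  have e : invLen (w * sw r k hk) = invLen (sw r k hk * w⁻¹) := by
    rw [← invLen_inv (w * sw r k hk), inv_sw_eq]
  rw [e, ← invLen_inv w]
  have := sw_mul_lt_iff hk w⁻¹
  simpa using this

lemma lt_mul_sw_iff {r k : ℕ} (hk : k + 1 < r) (w : Equiv.Perm (Fin r)) :
    invLen w < invLen (w * sw r k hk) ↔
      w (⟨k, Nat.lt_of_succ_lt hk⟩ : Fin r) < w (⟨k + 1, hk⟩ : Fin r) := by
  have e : invLen (w * sw r k hk) = invLen (sw r k hk * w⁻¹) := by
    rw [← invLen_inv (w * sw r k hk), inv_sw_eq]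
  rw [e, ← invLen_inv w]
  have := lt_sw_mul_iff hk w⁻¹
  simpa using this
-- Section 4: chains, membership, reversal
lemma mem_young_iff {r : ℕ} {c : List ℕ} {g : Equiv.Perm (Fin r)} :
    g ∈ youngSubgroup r c ↔ ∀ i : Fin r, blockIdx c ((g i : Fin r) : ℕ) = blockIdx c (i : ℕ) :=
  Iff.rfl

lemma swap_mem_young {r : ℕ} {c : List ℕ} {a b : Fin r}
    (h : blockIdx c (a : ℕ) = blockIdx c (b : ℕ)) : Equiv.swap a b ∈ youngSubgroup r c := by
  rw [mem_young_iff]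
  intro i
  rcases eq_or_ne i a with rfl | hia
  · rw [Equiv.swap_apply_left]; exact h.symm
  · rcases eq_or_ne i b with rfl | hib
    · rw [Equiv.swap_apply_right]; exact h
    · rw [Equiv.swap_apply_of_ne_of_ne hia hib]

lemma chain_dec {r : ℕ} {c : List ℕ} {f : Fin r → Fin r}
    (hf : ∀ (k : ℕ) (hk : k + 1 < r), blockIdx c k = blockIdx c (k + 1) →
      f ⟨k + 1, hk⟩ < f ⟨k, Nat.lt_of_succ_lt hk⟩)
    {i j : Fin r} (hij : i < j) (hb : blockIdx c (i : ℕ) = blockIdx c (j : ℕ)) :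
    f j < f i := by
  have key : ∀ (n : ℕ) (i j : Fin r), (j : ℕ) = (i : ℕ) + n + 1 →
      blockIdx c (i : ℕ) = blockIdx c (j : ℕ) → f j < f i := by
    intro n
    induction n with
    | zero =>
      intro i j hj hb
      have hk : (i : ℕ) + 1 < r := by have := j.isLt; omega
      have e1 : (⟨(i : ℕ) + 1, hk⟩ : Fin r) = j := by
        apply Fin.ext; show (i : ℕ) + 1 = (j : ℕ); omega
      have e2 : (⟨(i : ℕ), Nat.lt_of_succ_lt hk⟩ : Fin r) = i := Fin.ext rfl
      have := hf (i : ℕ) hk (by rw [show (i : ℕ) + 1 = (j : ℕ) from by omega]; exact hb)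
      rwa [e1, e2] at this
    | succ n ih =>
      intro i j hj hb
      have hm : (i : ℕ) + n + 1 < r := by have := j.isLt; omega
      set m : Fin r := ⟨(i : ℕ) + n + 1, hm⟩ with hmdef
      have hmv : (m : ℕ) = (i : ℕ) + n + 1 := rfl
      have hbm : blockIdx c (m : ℕ) = blockIdx c (i : ℕ) :=
        blockIdx_squeeze c (by omega) (by omega) hb
      have h1 : f m < f i := ih i m hmv hbm.symm
      have hk : (m : ℕ) + 1 < r := by have := j.isLt; omega
      have e1 : (⟨(m : ℕ) + 1, hk⟩ : Fin r) = j := by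
        apply Fin.ext; show (m : ℕ) + 1 = (j : ℕ); omega
      have e2 : (⟨(m : ℕ), Nat.lt_of_succ_lt hk⟩ : Fin r) = m := Fin.ext rfl
      have h2 := hf (m : ℕ) hk (by rw [show (m : ℕ) + 1 = (j : ℕ) from by omega, hbm]; exact hb)
      rw [e1, e2] at h2
      exact lt_trans h2 h1
  have hij' : (i : ℕ) < (j : ℕ) := hij
  exact key ((j : ℕ) - (i : ℕ) - 1) i j (by omega) hb

lemma chain_inc {r : ℕ} {c : List ℕ} {f : Fin r → Fin r}
    (hf : ∀ (k : ℕ) (hk : k + 1 < r), blockIdx c k = blockIdx c (k + 1) →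
      f ⟨k, Nat.lt_of_succ_lt hk⟩ < f ⟨k + 1, hk⟩)
    {i j : Fin r} (hij : i < j) (hb : blockIdx c (i : ℕ) = blockIdx c (j : ℕ)) :
    f i < f j := by
  let g : Fin r → Fin r := fun t => (f t).rev
  have hg : ∀ (k : ℕ) (hk : k + 1 < r), blockIdx c k = blockIdx c (k + 1) →
      g ⟨k + 1, hk⟩ < g ⟨k, Nat.lt_of_succ_lt hk⟩ := by
    intro k hk hbk
    have := hf k hk hbk
    simp only [g, Fin.rev_lt_rev]
    exact this
  have := chain_dec hg hij hb
  simpa only [g, Fin.rev_lt_rev] using this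

lemma monotone_comp_perm_eq {r : ℕ} {G : Fin r → ℕ} (e : Equiv.Perm (Fin r))
    (hF : Monotone (G ∘ e)) (hG : Monotone G) : ∀ i, G (e i) = G i := by
  have h := Tuple.unique_monotone (f := G) (σ := e) (τ := Equiv.refl (Fin r)) hF (by simpa using hG)
  intro i
  have := congrFun h i
  simpa using this

-- blockwise reversal
def revBfun {r : ℕ} (c : List ℕ) (hc : c.sum = r) (j : Fin r) : Fin r :=
  ⟨(c.take (blockIdx c (j : ℕ))).sum + (c.take (blockIdx c (j : ℕ) + 1)).sum - 1 - (j : ℕ), by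
    have h1 := take_blockIdx_sum_le c (j : ℕ)
    have h2 := lt_take_blockIdx_succ_sum c (show (j : ℕ) < c.sum by rw [hc]; exact j.isLt)
    have h3 := take_sum_le c (blockIdx c (j : ℕ) + 1)
    omega⟩

lemma revBfun_blockIdx {r : ℕ} (c : List ℕ) (hc : c.sum = r) (j : Fin r) :
    blockIdx c ((revBfun c hc j : Fin r) : ℕ) = blockIdx c (j : ℕ) := by
  have h1 := take_blockIdx_sum_le c (j : ℕ)
  have h2 := lt_take_blockIdx_succ_sum c (show (j : ℕ) < c.sum by rw [hc]; exact j.isLt)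
  apply blockIdx_eq_of_bounds
  · show (c.take (blockIdx c (j : ℕ))).sum ≤ _; simp only [revBfun]; omega
  · show _ < (c.take (blockIdx c (j : ℕ) + 1)).sum; simp only [revBfun]; omega

lemma revBfun_involutive {r : ℕ} (c : List ℕ) (hc : c.sum = r) :
    Function.Involutive (revBfun c hc) := by
  intro j
  have h1 := take_blockIdx_sum_le c (j : ℕ)
  have h2 := lt_take_blockIdx_succ_sum c (show (j : ℕ) < c.sum by rw [hc]; exact j.isLt)
  apply Fin.ext
  show (c.take (blockIdx c ((revBfun c hc j : Fin r) : ℕ))).sum +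
      (c.take (blockIdx c ((revBfun c hc j : Fin r) : ℕ) + 1)).sum - 1 -
      ((revBfun c hc j : Fin r) : ℕ) = (j : ℕ)
  rw [revBfun_blockIdx]
  show _ + _ - 1 - ((c.take (blockIdx c (j : ℕ))).sum + (c.take (blockIdx c (j : ℕ) + 1)).sum
      - 1 - (j : ℕ)) = (j : ℕ)
  omega

def revB {r : ℕ} (c : List ℕ) (hc : c.sum = r) : Equiv.Perm (Fin r) :=
  (revBfun_involutive c hc).toPerm

lemma revB_apply {r : ℕ} (c : List ℕ) (hc : c.sum = r) (j : Fin r) :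
    revB c hc j = revBfun c hc j := rfl

lemma revB_blockIdx {r : ℕ} (c : List ℕ) (hc : c.sum = r) (j : Fin r) :
    blockIdx c ((revB c hc j : Fin r) : ℕ) = blockIdx c (j : ℕ) := revBfun_blockIdx c hc j

lemma revB_rev {r : ℕ} (c : List ℕ) (hc : c.sum = r) {j j' : Fin r}
    (h : blockIdx c (j : ℕ) = blockIdx c (j' : ℕ)) (hlt : j < j') :
    revB c hc j' < revB c hc j := by
  have h1 := take_blockIdx_sum_le c (j : ℕ)
  have h2 := lt_take_blockIdx_succ_sum c (show (j : ℕ) < c.sum by rw [hc]; exact j.isLt)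
  have h1' := take_blockIdx_sum_le c (j' : ℕ)
  have h2' := lt_take_blockIdx_succ_sum c (show (j' : ℕ) < c.sum by rw [hc]; exact j'.isLt)
  have hlt' : (j : ℕ) < (j' : ℕ) := hlt
  show ((revBfun c hc j' : Fin r) : ℕ) < ((revBfun c hc j : Fin r) : ℕ)
  show (c.take (blockIdx c (j' : ℕ))).sum + (c.take (blockIdx c (j' : ℕ) + 1)).sum - 1 - (j' : ℕ) <
    (c.take (blockIdx c (j : ℕ))).sum + (c.take (blockIdx c (j : ℕ) + 1)).sum - 1 - (j : ℕ)
  rw [← h] at h1' h2' ⊢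
  omega

lemma revB_eq_self {r : ℕ} (c : List ℕ) (hc : c.sum = r) {j : Fin r}
    (hs : (c.take (blockIdx c (j : ℕ))).sum = (j : ℕ))
    (he : (c.take (blockIdx c (j : ℕ) + 1)).sum = (j : ℕ) + 1) :
    revB c hc j = j := by
  apply Fin.ext
  show (c.take (blockIdx c (j : ℕ))).sum + (c.take (blockIdx c (j : ℕ) + 1)).sum - 1 - (j : ℕ)
      = (j : ℕ)
  omega

lemma revB_val_lt {r : ℕ} (c : List ℕ) (hc : c.sum = r) (j : Fin r) :
    ((revB c hc j : Fin r) : ℕ) < (c.take (blockIdx c (j : ℕ) + 1)).sum := by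
  have h1 := take_blockIdx_sum_le c (j : ℕ)
  have h2 := lt_take_blockIdx_succ_sum c (show (j : ℕ) < c.sum by rw [hc]; exact j.isLt)
  show (c.take (blockIdx c (j : ℕ))).sum + (c.take (blockIdx c (j : ℕ) + 1)).sum - 1 - (j : ℕ) < _
  omega
-- Section 5: bridges between padded and concatenated compositions
lemma sum_take_replicate_one (m t : ℕ) : ((List.replicate m 1 : List ℕ).take t).sum = min t m := by
  rw [List.take_replicate]; simp [List.sum_replicate]

lemma padRight_bridge {r : ℕ} {c : List ℕ} (c2 : List ℕ) (hsum : c.sum + c2.sum = r) {i i' : ℕ}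
    (hi : i < r) (hi' : i' < r) (hne : i ≠ i')
    (h : blockIdx (padRight r c) i = blockIdx (padRight r c) i') :
    i < c.sum ∧ i' < c.sum ∧ blockIdx (c ++ c2) i = blockIdx (c ++ c2) i' := by
  rw [padRight] at h
  obtain ⟨ha, hb, hc⟩ := padR_same_block hne (by omega) (by omega) h
  exact ⟨ha, hb, by rw [blockIdx_append_left c2 ha, blockIdx_append_left c2 hb]; exact hc⟩

lemma padRight_bridge' (r : ℕ) (c c2 : List ℕ) {i i' : ℕ}
    (hi : i < c.sum) (hi' : i' < c.sum)
    (h : blockIdx (c ++ c2) i = blockIdx (c ++ c2) i') :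
    blockIdx (padRight r c) i = blockIdx (padRight r c) i' := by
  rw [padRight, blockIdx_append_left _ hi, blockIdx_append_left _ hi']
  rw [blockIdx_append_left c2 hi, blockIdx_append_left c2 hi'] at h
  exact h

lemma padLeft_bridge {r : ℕ} {c : List ℕ} (c1 : List ℕ) (hsum : c1.sum + c.sum = r) {i i' : ℕ}
    (hi : i < r) (hi' : i' < r) (hne : i ≠ i')
    (h : blockIdx (padLeft r c) i = blockIdx (padLeft r c) i') :
    c1.sum ≤ i ∧ c1.sum ≤ i' ∧ blockIdx (c1 ++ c) i = blockIdx (c1 ++ c) i' := by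
  rw [padLeft, show r - c.sum = c1.sum from by omega] at h
  obtain ⟨ha, hb, hc⟩ := padL_same_block hne (by omega) (by omega) h
  refine ⟨ha, hb, ?_⟩
  rw [blockIdx_append_right c ha (by omega), blockIdx_append_right c hb (by omega), hc]

lemma padLeft_bridge' (r : ℕ) (c1 c : List ℕ) (hsum : c1.sum + c.sum = r) {i i' : ℕ}
    (hi : c1.sum ≤ i) (hi2 : i < r) (hi' : c1.sum ≤ i') (hi'2 : i' < r)
    (h : blockIdx (c1 ++ c) i = blockIdx (c1 ++ c) i') :
    blockIdx (padLeft r c) i = blockIdx (padLeft r c) i' := by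
  rw [padLeft, show r - c.sum = c1.sum from by omega,
    blockIdx_padL_of_ge hi (by omega), blockIdx_padL_of_ge hi' (by omega)]
  rw [blockIdx_append_right c hi (by omega), blockIdx_append_right c hi' (by omega)] at h
  omega

lemma classBlock {c1 c2 : List ℕ} {i i' : ℕ} (hi : i < c1.sum + c2.sum) (hi' : i' < c1.sum + c2.sum)
    (h : blockIdx (c1 ++ c2) i = blockIdx (c1 ++ c2) i') : (i < c1.sum ↔ i' < c1.sum) := by
  rw [← blockIdx_lt_length_iff hi, ← blockIdx_lt_length_iff hi', h]

/-- Let `λ|μ` and `ξ|η` be pairs of compositions with `λ∨μ` and `ξ∨η` compositions of `r`,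
and `d` a minimal-length representative of the double coset `S_{λ|μ} d S_{ξ|η}`.
Then the double coset contains an element `x` with `sx < x, tx > x` for all simple
reflections `s ∈ λ`, `t ∈ μ` and `xs < x, xt > x` for all `s ∈ ξ`, `t ∈ η`, if and only
if `S_{λ*} ∩ d S_{*η} d⁻¹ = {1}` and `S_{*μ} ∩ d S_{ξ*} d⁻¹ = {1}`. -/
theorem stmt5 (r : ℕ) (lam mu xi eta : List ℕ)
    (h1 : (lam ++ mu).sum = r) (h2 : (xi ++ eta).sum = r)
    (d : Equiv.Perm (Fin r))
    (hd : ∀ a ∈ youngSubgroup r (lam ++ mu), ∀ b ∈ youngSubgroup r (xi ++ eta),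
      invLen d ≤ invLen (a * d * b)) :
    (∃ x : Equiv.Perm (Fin r),
      (∃ a ∈ youngSubgroup r (lam ++ mu), ∃ b ∈ youngSubgroup r (xi ++ eta),
        x = a * d * b) ∧
      ∀ (k : ℕ) (hk : k + 1 < r),
        (sameBlock (padRight r lam) k → invLen (sw r k hk * x) < invLen x) ∧
        (sameBlock (padLeft r mu) k → invLen x < invLen (sw r k hk * x)) ∧
        (sameBlock (padRight r xi) k → invLen (x * sw r k hk) < invLen x) ∧
        (sameBlock (padLeft r eta) k → invLen x < invLen (x * sw r k hk)))
    ↔ ((∀ g ∈ youngSubgroup r (padRight r lam),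
          d⁻¹ * g * d ∈ youngSubgroup r (padLeft r eta) → g = 1) ∧
        (∀ g ∈ youngSubgroup r (padLeft r mu),
          d⁻¹ * g * d ∈ youngSubgroup r (padRight r xi) → g = 1)) := by
  rw [List.sum_append] at h1 h2
  constructor
  · -- forward direction
    rintro ⟨x, ⟨a, ha, b, hb, hxeq⟩, hdesc⟩
    -- global monotonicity properties of x
    have D1 : ∀ i i' : Fin r, i < i' →
        blockIdx (padRight r lam) (i : ℕ) = blockIdx (padRight r lam) (i' : ℕ) →
        x⁻¹ i' < x⁻¹ i := by
      intro i i' hlt hbl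
      refine chain_dec (f := fun t => x⁻¹ t) ?_ hlt hbl
      intro k hk hbk
      exact (sw_mul_lt_iff hk x).1 ((hdesc k hk).1 hbk)
    have D2 : ∀ i i' : Fin r, i < i' →
        blockIdx (padLeft r mu) (i : ℕ) = blockIdx (padLeft r mu) (i' : ℕ) →
        x⁻¹ i < x⁻¹ i' := by
      intro i i' hlt hbl
      refine chain_inc (f := fun t => x⁻¹ t) ?_ hlt hbl
      intro k hk hbk
      exact (lt_sw_mul_iff hk x).1 ((hdesc k hk).2.1 hbk)
    have D3 : ∀ i i' : Fin r, i < i' →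
        blockIdx (padRight r xi) (i : ℕ) = blockIdx (padRight r xi) (i' : ℕ) →
        x i' < x i := by
      intro i i' hlt hbl
      refine chain_dec (f := fun t => x t) ?_ hlt hbl
      intro k hk hbk
      exact (mul_sw_lt_iff hk x).1 ((hdesc k hk).2.2.1 hbk)
    have D4 : ∀ i i' : Fin r, i < i' →
        blockIdx (padLeft r eta) (i : ℕ) = blockIdx (padLeft r eta) (i' : ℕ) →
        x i < x i' := by
      intro i i' hlt hbl
      refine chain_inc (f := fun t => x t) ?_ hlt hbl
      intro k hk hbk
      exact (lt_mul_sw_iff hk x).1 ((hdesc k hk).2.2.2 hbk)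
    -- pointwise forms
    have M1pt : ∀ i i' : Fin r,
        blockIdx (padRight r lam) (i : ℕ) = blockIdx (padRight r lam) (i' : ℕ) →
        blockIdx (padLeft r eta) ((d⁻¹ i : Fin r) : ℕ) = blockIdx (padLeft r eta) ((d⁻¹ i' : Fin r) : ℕ) →
        i = i' := by
      intro i i' hbP hbQ'
      by_contra hne
      have hnev : (i : ℕ) ≠ (i' : ℕ) := fun h => hne (Fin.ext h)
      obtain ⟨hi1, hi2, hbJ⟩ := padRight_bridge mu h1 i.isLt i'.isLt hnev hbP
      -- u := a i
      have hbJu : blockIdx (lam ++ mu) ((a i : Fin r) : ℕ) = blockIdx (lam ++ mu) ((a i' : Fin r) : ℕ) := by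
        rw [mem_young_iff] at ha
        rw [ha i, ha i', hbJ]
      have hneu : a i ≠ a i' := fun h => hne (a.injective h)
      have hu1 : ((a i : Fin r) : ℕ) < lam.sum := by
        rw [mem_young_iff] at ha
        exact (classBlock (by omega) (by omega) (ha i)).2 hi1
      have hu2 : ((a i' : Fin r) : ℕ) < lam.sum := by
        rw [mem_young_iff] at ha
        exact (classBlock (by omega) (by omega) (ha i')).2 hi2
      have hbPu : blockIdx (padRight r lam) ((a i : Fin r) : ℕ)
          = blockIdx (padRight r lam) ((a i' : Fin r) : ℕ) :=
        padRight_bridge' r lam mu hu1 hu2 hbJu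
      -- w := x⁻¹ (a i) = b⁻¹ (d⁻¹ i)
      have hxinv : ∀ t : Fin r, x⁻¹ (a t) = b⁻¹ (d⁻¹ t) := by
        intro t
        rw [hxeq]
        simp [mul_inv_rev, Equiv.Perm.mul_apply]
      have hnev1 : ((d⁻¹ i : Fin r) : ℕ) ≠ ((d⁻¹ i' : Fin r) : ℕ) := by
        intro h
        exact hne (d⁻¹.injective (Fin.ext h))
      obtain ⟨hv1, hv2, hbK⟩ := padLeft_bridge xi h2 (d⁻¹ i).isLt (d⁻¹ i').isLt hnev1 hbQ'
      have hbKw : blockIdx (xi ++ eta) ((b⁻¹ (d⁻¹ i) : Fin r) : ℕ)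
          = blockIdx (xi ++ eta) ((b⁻¹ (d⁻¹ i') : Fin r) : ℕ) := by
        have hbinv := (youngSubgroup r (xi ++ eta)).inv_mem hb
        rw [mem_young_iff] at hbinv
        rw [hbinv (d⁻¹ i), hbinv (d⁻¹ i'), hbK]
      have hw1 : xi.sum ≤ ((b⁻¹ (d⁻¹ i) : Fin r) : ℕ) := by
        have hbinv := (youngSubgroup r (xi ++ eta)).inv_mem hb
        rw [mem_young_iff] at hbinv
        by_contra hcon
        push_neg at hcon
        have := (classBlock (c1 := xi) (c2 := eta) (by omega) (by omega) (hbinv (d⁻¹ i))).1 hcon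
        omega
      have hw2 : xi.sum ≤ ((b⁻¹ (d⁻¹ i') : Fin r) : ℕ) := by
        have hbinv := (youngSubgroup r (xi ++ eta)).inv_mem hb
        rw [mem_young_iff] at hbinv
        by_contra hcon
        push_neg at hcon
        have := (classBlock (c1 := xi) (c2 := eta) (by omega) (by omega) (hbinv (d⁻¹ i'))).1 hcon
        omega
      have hbQ'w : blockIdx (padLeft r eta) ((b⁻¹ (d⁻¹ i) : Fin r) : ℕ)
          = blockIdx (padLeft r eta) ((b⁻¹ (d⁻¹ i') : Fin r) : ℕ) :=
        padLeft_bridge' r xi eta h2 hw1 (b⁻¹ (d⁻¹ i)).isLt hw2 (b⁻¹ (d⁻¹ i')).isLt hbKw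
      rcases lt_trichotomy (a i) (a i') with hlt | heq | hlt
      · have h5 : x⁻¹ (a i') < x⁻¹ (a i) := D1 (a i) (a i') hlt hbPu
        have h6 : x (x⁻¹ (a i')) < x (x⁻¹ (a i)) := by
          apply D4 _ _ ?_ ?_
          · rw [hxinv i, hxinv i'] at h5; rw [hxinv i, hxinv i']; exact h5
          · rw [hxinv i, hxinv i']
            exact hbQ'w.symm
        simp only [Equiv.Perm.coe_inv, Equiv.apply_symm_apply] at h6
        exact absurd hlt (not_lt.2 (le_of_lt h6))
      · exact hneu heq
      · have h5 : x⁻¹ (a i) < x⁻¹ (a i') := D1 (a i') (a i) hlt hbPu.symm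
        have h6 : x (x⁻¹ (a i)) < x (x⁻¹ (a i')) := by
          apply D4 _ _ ?_ ?_
          · rw [hxinv i, hxinv i'] at h5; rw [hxinv i, hxinv i']; exact h5
          · rw [hxinv i, hxinv i']
            exact hbQ'w
        simp only [Equiv.Perm.coe_inv, Equiv.apply_symm_apply] at h6
        exact absurd hlt (not_lt.2 (le_of_lt h6))
    have M2pt : ∀ i i' : Fin r,
        blockIdx (padLeft r mu) (i : ℕ) = blockIdx (padLeft r mu) (i' : ℕ) →
        blockIdx (padRight r xi) ((d⁻¹ i : Fin r) : ℕ) = blockIdx (padRight r xi) ((d⁻¹ i' : Fin r) : ℕ) →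
        i = i' := by
      intro i i' hbQ hbP'
      by_contra hne
      have hnev : (i : ℕ) ≠ (i' : ℕ) := fun h => hne (Fin.ext h)
      obtain ⟨hi1, hi2, hbJ⟩ := padLeft_bridge lam h1 i.isLt i'.isLt hnev hbQ
      have hbJu : blockIdx (lam ++ mu) ((a i : Fin r) : ℕ) = blockIdx (lam ++ mu) ((a i' : Fin r) : ℕ) := by
        rw [mem_young_iff] at ha
        rw [ha i, ha i', hbJ]
      have hneu : a i ≠ a i' := fun h => hne (a.injective h)
      have hu1 : lam.sum ≤ ((a i : Fin r) : ℕ) := by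
        rw [mem_young_iff] at ha
        by_contra hcon
        push_neg at hcon
        have := (classBlock (c1 := lam) (c2 := mu) (by omega) (by omega) (ha i)).1 hcon
        omega
      have hu2 : lam.sum ≤ ((a i' : Fin r) : ℕ) := by
        rw [mem_young_iff] at ha
        by_contra hcon
        push_neg at hcon
        have := (classBlock (c1 := lam) (c2 := mu) (by omega) (by omega) (ha i')).1 hcon
        omega
      have hbQu : blockIdx (padLeft r mu) ((a i : Fin r) : ℕ)
          = blockIdx (padLeft r mu) ((a i' : Fin r) : ℕ) :=
        padLeft_bridge' r lam mu h1 hu1 (a i).isLt hu2 (a i').isLt hbJu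
      have hxinv : ∀ t : Fin r, x⁻¹ (a t) = b⁻¹ (d⁻¹ t) := by
        intro t
        rw [hxeq]
        simp [mul_inv_rev, Equiv.Perm.mul_apply]
      have hnev1 : ((d⁻¹ i : Fin r) : ℕ) ≠ ((d⁻¹ i' : Fin r) : ℕ) := by
        intro h
        exact hne (d⁻¹.injective (Fin.ext h))
      obtain ⟨hv1, hv2, hbK⟩ := padRight_bridge eta h2 (d⁻¹ i).isLt (d⁻¹ i').isLt hnev1 hbP'
      have hbKw : blockIdx (xi ++ eta) ((b⁻¹ (d⁻¹ i) : Fin r) : ℕ)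
          = blockIdx (xi ++ eta) ((b⁻¹ (d⁻¹ i') : Fin r) : ℕ) := by
        have hbinv := (youngSubgroup r (xi ++ eta)).inv_mem hb
        rw [mem_young_iff] at hbinv
        rw [hbinv (d⁻¹ i), hbinv (d⁻¹ i'), hbK]
      have hw1 : ((b⁻¹ (d⁻¹ i) : Fin r) : ℕ) < xi.sum := by
        have hbinv := (youngSubgroup r (xi ++ eta)).inv_mem hb
        rw [mem_young_iff] at hbinv
        exact (classBlock (by omega) (by omega) (hbinv (d⁻¹ i))).2 hv1
      have hw2 : ((b⁻¹ (d⁻¹ i') : Fin r) : ℕ) < xi.sum := by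
        have hbinv := (youngSubgroup r (xi ++ eta)).inv_mem hb
        rw [mem_young_iff] at hbinv
        exact (classBlock (by omega) (by omega) (hbinv (d⁻¹ i'))).2 hv2
      have hbP'w : blockIdx (padRight r xi) ((b⁻¹ (d⁻¹ i) : Fin r) : ℕ)
          = blockIdx (padRight r xi) ((b⁻¹ (d⁻¹ i') : Fin r) : ℕ) :=
        padRight_bridge' r xi eta hw1 hw2 hbKw
      rcases lt_trichotomy (a i) (a i') with hlt | heq | hlt
      · have h5 : x⁻¹ (a i) < x⁻¹ (a i') := D2 (a i) (a i') hlt hbQu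
        have h6 : x (x⁻¹ (a i')) < x (x⁻¹ (a i)) := by
          apply D3 _ _ ?_ ?_
          · rw [hxinv i, hxinv i'] at h5; rw [hxinv i, hxinv i']; exact h5
          · rw [hxinv i, hxinv i']
            exact hbP'w
        simp only [Equiv.Perm.coe_inv, Equiv.apply_symm_apply] at h6
        exact absurd hlt (not_lt.2 (le_of_lt h6))
      · exact hneu heq
      · have h5 : x⁻¹ (a i') < x⁻¹ (a i) := D2 (a i') (a i) hlt hbQu.symm
        have h6 : x (x⁻¹ (a i)) < x (x⁻¹ (a i')) := by
          apply D3 _ _ ?_ ?_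
          · rw [hxinv i, hxinv i'] at h5; rw [hxinv i, hxinv i']; exact h5
          · rw [hxinv i, hxinv i']
            exact hbP'w.symm
        simp only [Equiv.Perm.coe_inv, Equiv.apply_symm_apply] at h6
        exact absurd hlt (not_lt.2 (le_of_lt h6))
    constructor
    · intro g hg hconj
      apply Equiv.ext
      intro i
      rw [mem_young_iff] at hg hconj
      have hbP : blockIdx (padRight r lam) ((g i : Fin r) : ℕ) = blockIdx (padRight r lam) (i : ℕ) := hg i
      have hbQ' : blockIdx (padLeft r eta) ((d⁻¹ (g i) : Fin r) : ℕ)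
          = blockIdx (padLeft r eta) ((d⁻¹ i : Fin r) : ℕ) := by
        have := hconj (d⁻¹ i)
        simp only [Equiv.Perm.mul_apply, Equiv.Perm.coe_inv, Equiv.apply_symm_apply] at this
        exact this
      have := M1pt (g i) i hbP hbQ'
      simpa using this
    · intro g hg hconj
      apply Equiv.ext
      intro i
      rw [mem_young_iff] at hg hconj
      have hbQ : blockIdx (padLeft r mu) ((g i : Fin r) : ℕ) = blockIdx (padLeft r mu) (i : ℕ) := hg i
      have hbP' : blockIdx (padRight r xi) ((d⁻¹ (g i) : Fin r) : ℕ)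
          = blockIdx (padRight r xi) ((d⁻¹ i : Fin r) : ℕ) := by
        have := hconj (d⁻¹ i)
        simp only [Equiv.Perm.mul_apply, Equiv.Perm.coe_inv, Equiv.apply_symm_apply] at this
        exact this
      have := M2pt (g i) i hbQ hbP'
      simpa using this
  · -- backward direction
    rintro ⟨hg1, hg2⟩
    -- pointwise trivial-intersection conditions
    have M1 : ∀ i i' : Fin r,
        blockIdx (padRight r lam) (i : ℕ) = blockIdx (padRight r lam) (i' : ℕ) →
        blockIdx (padLeft r eta) ((d⁻¹ i : Fin r) : ℕ) = blockIdx (padLeft r eta) ((d⁻¹ i' : Fin r) : ℕ) →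
        i = i' := by
      intro i i' hbP hbQ'
      by_contra hne
      have hmem1 : Equiv.swap i i' ∈ youngSubgroup r (padRight r lam) := swap_mem_young hbP
      have he : Equiv.swap (d⁻¹ i) (d⁻¹ i') = d⁻¹ * Equiv.swap i i' * d := by
        have h := Equiv.swap_apply_apply d⁻¹ i i'
        rwa [inv_inv] at h
      have hconj : d⁻¹ * Equiv.swap i i' * d ∈ youngSubgroup r (padLeft r eta) := by
        rw [← he]; exact swap_mem_young hbQ'
      have h0 := hg1 _ hmem1 hconj
      have h3 : Equiv.swap i i' i = (1 : Equiv.Perm (Fin r)) i := by rw [h0]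
      rw [Equiv.swap_apply_left] at h3
      simp at h3
      exact hne h3.symm
    have M2 : ∀ i i' : Fin r,
        blockIdx (padLeft r mu) (i : ℕ) = blockIdx (padLeft r mu) (i' : ℕ) →
        blockIdx (padRight r xi) ((d⁻¹ i : Fin r) : ℕ) = blockIdx (padRight r xi) ((d⁻¹ i' : Fin r) : ℕ) →
        i = i' := by
      intro i i' hbQ hbP'
      by_contra hne
      have hmem1 : Equiv.swap i i' ∈ youngSubgroup r (padLeft r mu) := swap_mem_young hbQ
      have he : Equiv.swap (d⁻¹ i) (d⁻¹ i') = d⁻¹ * Equiv.swap i i' * d := by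
        have h := Equiv.swap_apply_apply d⁻¹ i i'
        rwa [inv_inv] at h
      have hconj : d⁻¹ * Equiv.swap i i' * d ∈ youngSubgroup r (padRight r xi) := by
        rw [← he]; exact swap_mem_young hbP'
      have h0 := hg2 _ hmem1 hconj
      have h3 : Equiv.swap i i' i = (1 : Equiv.Perm (Fin r)) i := by rw [h0]
      rw [Equiv.swap_apply_left] at h3
      simp at h3
      exact hne h3.symm
    -- d is increasing on (ξ|η)-blocks
    have hdinc : ∀ j j' : Fin r, j < j' →
        blockIdx (xi ++ eta) (j : ℕ) = blockIdx (xi ++ eta) (j' : ℕ) → d j < d j' := by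
      intro j j' hlt hbl
      refine chain_inc (f := fun t => d t) ?_ hlt hbl
      intro k hk hbk
      have hmem : sw r k hk ∈ youngSubgroup r (xi ++ eta) := by
        rw [sw]; exact swap_mem_young hbk
      have hle := hd 1 (one_mem _) (sw r k hk) hmem
      rw [one_mul] at hle
      by_contra hcon
      push_neg at hcon
      rcases lt_or_eq_of_le hcon with hl | heq
      · have := (mul_sw_lt_iff hk d).2 hl
        omega
      · have h4 : (k : ℕ) + 1 = k := congrArg Fin.val (d.injective heq)
        omega
    -- the reversal permutation on ξ-blocks
    have hP'sum : (padRight r xi).sum = r := by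
      rw [padRight, List.sum_append]; simp; omega
    set v := revB (padRight r xi) hP'sum with hvdef
    have hvblockP' : ∀ j : Fin r,
        blockIdx (padRight r xi) ((v j : Fin r) : ℕ) = blockIdx (padRight r xi) (j : ℕ) :=
      fun j => revB_blockIdx _ hP'sum j
    have hvK : ∀ j : Fin r,
        blockIdx (xi ++ eta) ((v j : Fin r) : ℕ) = blockIdx (xi ++ eta) (j : ℕ) := by
      intro j
      rcases eq_or_ne (v j) j with he | hne
      · rw [he]
      · have hnev : ((v j : Fin r) : ℕ) ≠ (j : ℕ) := fun h => hne (Fin.ext h)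
        obtain ⟨_, _, h3⟩ := padRight_bridge eta h2 (v j).isLt j.isLt hnev (hvblockP' j)
        exact h3
    have hvfix : ∀ j : Fin r, xi.sum ≤ (j : ℕ) → v j = j := by
      intro j hj
      have hjr : (j : ℕ) < r := j.isLt
      have hbl : blockIdx (padRight r xi) (j : ℕ) = xi.length + ((j : ℕ) - xi.sum) := by
        rw [padRight]; exact blockIdx_padR_of_ge hj (by omega)
      apply revB_eq_self
      · rw [hbl, padRight, take_append_sum', sum_take_replicate_one]
        omega
      · rw [hbl, padRight,
          show xi.length + ((j : ℕ) - xi.sum) + 1 = xi.length + (((j : ℕ) - xi.sum) + 1) from by omega,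
          take_append_sum', sum_take_replicate_one]
        omega
    have hvlt : ∀ j : Fin r, (j : ℕ) < xi.sum → ((v j : Fin r) : ℕ) < xi.sum := by
      intro j hj
      have h5 := revB_val_lt (padRight r xi) hP'sum j
      have hbl : blockIdx (padRight r xi) (j : ℕ) = blockIdx xi (j : ℕ) := by
        rw [padRight]; exact blockIdx_append_left _ hj
      rw [hbl] at h5
      have hlen := blockIdx_lt_length xi hj
      have he : ((padRight r xi).take (blockIdx xi (j : ℕ) + 1)).sum
          = (xi.take (blockIdx xi (j : ℕ) + 1)).sum := by
        rw [padRight]; exact take_append_sum _ _ (by omega)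
      rw [he] at h5
      exact lt_of_lt_of_le h5 (take_sum_le xi _)
    -- the sorting permutation
    set y := d * v with hydef
    set κ : Fin r → ℕ ×ₗ ℕ := fun j =>
      toLex (blockIdx (lam ++ mu) ((y j : Fin r) : ℕ),
        if ((y j : Fin r) : ℕ) < lam.sum then r - 1 - (j : ℕ) else (j : ℕ)) with hκdef
    set π := Tuple.sort κ with hπdef
    have hmono : Monotone (κ ∘ π) := Tuple.monotone_sort κ
    have hκinj : Function.Injective κ := by
      intro j j' he
      rw [hκdef] at he
      have hpair := toLex.injective he
      have hfst : blockIdx (lam ++ mu) ((y j : Fin r) : ℕ)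
          = blockIdx (lam ++ mu) ((y j' : Fin r) : ℕ) := congrArg Prod.fst hpair
      have hsnd := congrArg Prod.snd hpair
      simp only at hsnd
      have hcls := classBlock (c1 := lam) (c2 := mu) (by omega) (by omega) hfst
      by_cases hy : ((y j : Fin r) : ℕ) < lam.sum
      · rw [if_pos hy, if_pos (hcls.1 hy)] at hsnd
        have hjv := j.isLt
        have hjv' := j'.isLt
        exact Fin.ext (by omega)
      · rw [if_neg hy, if_neg (fun h => hy (hcls.2 h))] at hsnd
        exact Fin.ext hsnd
    have hsm : StrictMono (κ ∘ π) := hmono.strictMono_of_injective (hκinj.comp π.injective)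
    have hκlt : ∀ p q : Fin r, κ p < κ q →
        blockIdx (lam ++ mu) ((y p : Fin r) : ℕ) < blockIdx (lam ++ mu) ((y q : Fin r) : ℕ) ∨
        (blockIdx (lam ++ mu) ((y p : Fin r) : ℕ) = blockIdx (lam ++ mu) ((y q : Fin r) : ℕ) ∧
          (if ((y p : Fin r) : ℕ) < lam.sum then r - 1 - (p : ℕ) else (p : ℕ)) <
          (if ((y q : Fin r) : ℕ) < lam.sum then r - 1 - (q : ℕ) else (q : ℕ))) := by
      intro p q h
      rw [hκdef] at h
      exact Prod.Lex.lt_iff.1 h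
    have hsmapp : ∀ i i' : Fin r, i < i' → κ (π i) < κ (π i') := fun i i' h => hsm h
    have hsm' : ∀ p q : Fin r, π⁻¹ p < π⁻¹ q → κ p < κ q := by
      intro p q h
      have h5 := hsm h
      simpa only [Function.comp_apply, Equiv.Perm.coe_inv, Equiv.apply_symm_apply] using h5
    -- the key "block-profile" identity
    have hGmono : Monotone (fun i : Fin r => blockIdx (lam ++ mu) (i : ℕ)) := by
      intro i i' h
      exact blockIdx_mono _ h
    have hFmono : Monotone (fun i : Fin r => blockIdx (lam ++ mu) ((y (π i) : Fin r) : ℕ)) := by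
      intro i i' h
      rcases lt_or_eq_of_le h with hlt | heq
      · rcases hκlt _ _ (hsmapp _ _ hlt) with hc | ⟨hc, _⟩
        · exact le_of_lt hc
        · exact le_of_eq hc
      · rw [heq]
    have hEps : ∀ i : Fin r, blockIdx (lam ++ mu) ((y (π i) : Fin r) : ℕ)
        = blockIdx (lam ++ mu) (i : ℕ) :=
      monotone_comp_perm_eq (G := fun p : Fin r => blockIdx (lam ++ mu) (p : ℕ)) (π.trans y)
        hFmono hGmono
    -- α: x⁻¹ strictly decreasing on λ*-blocks (x = π⁻¹, x⁻¹ = π)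
    have alpha : ∀ i i' : Fin r, i < i' →
        blockIdx (padRight r lam) (i : ℕ) = blockIdx (padRight r lam) (i' : ℕ) →
        π i' < π i := by
      intro i i' hlt hbP
      have hnev : (i : ℕ) ≠ (i' : ℕ) := fun h => (ne_of_lt hlt) (Fin.ext h)
      obtain ⟨hi1, hi2, hbJ⟩ := padRight_bridge mu h1 i.isLt i'.isLt hnev hbP
      have hy1 : ((y (π i) : Fin r) : ℕ) < lam.sum :=
        (classBlock (by omega) (by omega) (hEps i)).2 hi1
      have hy2 : ((y (π i') : Fin r) : ℕ) < lam.sum :=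
        (classBlock (by omega) (by omega) (hEps i')).2 hi2
      have hb1 : blockIdx (lam ++ mu) ((y (π i) : Fin r) : ℕ)
          = blockIdx (lam ++ mu) ((y (π i') : Fin r) : ℕ) := by
        rw [hEps i, hEps i', hbJ]
      rcases hκlt _ _ (hsmapp _ _ hlt) with hc | ⟨_, hc⟩
      · omega
      · rw [if_pos hy1, if_pos hy2] at hc
        have hv1 := (π i).isLt
        have hv2 := (π i').isLt
        exact Fin.lt_def.2 (by omega)
    -- β: x⁻¹ strictly increasing on *μ-blocks
    have beta : ∀ i i' : Fin r, i < i' →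
        blockIdx (padLeft r mu) (i : ℕ) = blockIdx (padLeft r mu) (i' : ℕ) →
        π i < π i' := by
      intro i i' hlt hbQ
      have hnev : (i : ℕ) ≠ (i' : ℕ) := fun h => (ne_of_lt hlt) (Fin.ext h)
      obtain ⟨hi1, hi2, hbJ⟩ := padLeft_bridge lam h1 i.isLt i'.isLt hnev hbQ
      have hy1 : ¬ ((y (π i) : Fin r) : ℕ) < lam.sum := by
        intro h
        have := (classBlock (by omega) (by omega) (hEps i)).1 h
        omega
      have hy2 : ¬ ((y (π i') : Fin r) : ℕ) < lam.sum := by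
        intro h
        have := (classBlock (by omega) (by omega) (hEps i')).1 h
        omega
      have hb1 : blockIdx (lam ++ mu) ((y (π i) : Fin r) : ℕ)
          = blockIdx (lam ++ mu) ((y (π i') : Fin r) : ℕ) := by
        rw [hEps i, hEps i', hbJ]
      rcases hκlt _ _ (hsmapp _ _ hlt) with hc | ⟨_, hc⟩
      · omega
      · rw [if_neg hy1, if_neg hy2] at hc
        exact Fin.lt_def.2 hc
    -- γ: x strictly decreasing on ξ*-blocks
    have gamma : ∀ j j' : Fin r, j < j' →
        blockIdx (padRight r xi) (j : ℕ) = blockIdx (padRight r xi) (j' : ℕ) →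
        π⁻¹ j' < π⁻¹ j := by
      intro j j' hlt hbP'
      have hnev : (j : ℕ) ≠ (j' : ℕ) := fun h => (ne_of_lt hlt) (Fin.ext h)
      obtain ⟨hj1, hj2, hbK⟩ := padRight_bridge eta h2 j.isLt j'.isLt hnev hbP'
      have hvrev : v j' < v j := revB_rev _ hP'sum hbP' hlt
      have hbKv : blockIdx (xi ++ eta) ((v j' : Fin r) : ℕ)
          = blockIdx (xi ++ eta) ((v j : Fin r) : ℕ) := by
        rw [hvK j, hvK j', hbK]
      have hylt : y j' < y j := hdinc (v j') (v j) hvrev hbKv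
      rcases lt_trichotomy (π⁻¹ j) (π⁻¹ j') with hc | hc | hc
      · exfalso
        have hk2 : κ j < κ j' := hsm' j j' hc
        have hmono2 : blockIdx (lam ++ mu) ((y j' : Fin r) : ℕ)
            ≤ blockIdx (lam ++ mu) ((y j : Fin r) : ℕ) := blockIdx_mono _ (le_of_lt hylt)
        rcases hκlt _ _ hk2 with hc2 | ⟨heq2, hc2⟩
        · omega
        · by_cases hy : ((y j : Fin r) : ℕ) < lam.sum
          · have hy' : ((y j' : Fin r) : ℕ) < lam.sum :=
              (classBlock (by omega) (by omega) heq2).1 hy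
            rw [if_pos hy, if_pos hy'] at hc2
            have hjv := j.isLt
            have hjv' := j'.isLt
            have hltv : (j : ℕ) < (j' : ℕ) := hlt
            omega
          · have hy' : ¬ ((y j' : Fin r) : ℕ) < lam.sum :=
              fun h => hy ((classBlock (by omega) (by omega) heq2).2 h)
            push_neg at hy hy'
            have hQb : blockIdx (padLeft r mu) ((y j : Fin r) : ℕ)
                = blockIdx (padLeft r mu) ((y j' : Fin r) : ℕ) :=
              padLeft_bridge' r lam mu h1 hy (y j).isLt hy' (y j').isLt heq2
            have hd1 : d⁻¹ (y j) = v j := by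
              rw [hydef]; simp [Equiv.Perm.mul_apply]
            have hd2 : d⁻¹ (y j') = v j' := by
              rw [hydef]; simp [Equiv.Perm.mul_apply]
            have hP'b : blockIdx (padRight r xi) ((d⁻¹ (y j) : Fin r) : ℕ)
                = blockIdx (padRight r xi) ((d⁻¹ (y j') : Fin r) : ℕ) := by
              rw [hd1, hd2, hvblockP' j, hvblockP' j', hbP']
            have := M2 (y j) (y j') hQb hP'b
            exact (ne_of_lt hylt) this.symm
      · exact absurd (π⁻¹.injective hc) (ne_of_lt hlt)
      · exact hc
    -- δ: x strictly increasing on *η-blocks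
    have delta : ∀ j j' : Fin r, j < j' →
        blockIdx (padLeft r eta) (j : ℕ) = blockIdx (padLeft r eta) (j' : ℕ) →
        π⁻¹ j < π⁻¹ j' := by
      intro j j' hlt hbQ'
      have hnev : (j : ℕ) ≠ (j' : ℕ) := fun h => (ne_of_lt hlt) (Fin.ext h)
      obtain ⟨hj1, hj2, hbK⟩ := padLeft_bridge xi h2 j.isLt j'.isLt hnev hbQ'
      have hfix1 : v j = j := hvfix j hj1
      have hfix2 : v j' = j' := hvfix j' hj2
      have hylt : y j < y j' := by
        show d (v j) < d (v j')
        rw [hfix1, hfix2]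
        exact hdinc j j' hlt hbK
      rcases lt_trichotomy (π⁻¹ j) (π⁻¹ j') with hc | hc | hc
      · exact hc
      · exact absurd (π⁻¹.injective hc) (ne_of_lt hlt)
      · exfalso
        have hk2 : κ j' < κ j := hsm' j' j hc
        have hmono2 : blockIdx (lam ++ mu) ((y j : Fin r) : ℕ)
            ≤ blockIdx (lam ++ mu) ((y j' : Fin r) : ℕ) := blockIdx_mono _ (le_of_lt hylt)
        rcases hκlt _ _ hk2 with hc2 | ⟨heq2, hc2⟩
        · omega
        · by_cases hy : ((y j : Fin r) : ℕ) < lam.sum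
          · have hy' : ((y j' : Fin r) : ℕ) < lam.sum :=
              (classBlock (by omega) (by omega) heq2.symm).1 hy
            have hPb : blockIdx (padRight r lam) ((y j : Fin r) : ℕ)
                = blockIdx (padRight r lam) ((y j' : Fin r) : ℕ) :=
              padRight_bridge' r lam mu hy hy' heq2.symm
            have hd1 : d⁻¹ (y j) = v j := by
              rw [hydef]; simp [Equiv.Perm.mul_apply]
            have hd2 : d⁻¹ (y j') = v j' := by
              rw [hydef]; simp [Equiv.Perm.mul_apply]
            have hQ'b : blockIdx (padLeft r eta) ((d⁻¹ (y j) : Fin r) : ℕ)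
                = blockIdx (padLeft r eta) ((d⁻¹ (y j') : Fin r) : ℕ) := by
              rw [hd1, hd2, hfix1, hfix2, hbQ']
            have := M1 (y j) (y j') hPb hQ'b
            exact (ne_of_lt hylt) this
          · have hy' : ¬ ((y j' : Fin r) : ℕ) < lam.sum :=
              fun h => hy ((classBlock (by omega) (by omega) heq2.symm).2 h)
            rw [if_neg hy, if_neg hy'] at hc2
            have hltv : (j : ℕ) < (j' : ℕ) := hlt
            omega
    -- assemble the witness x = π⁻¹
    refine ⟨π⁻¹, ⟨π⁻¹ * v⁻¹ * d⁻¹, ?_, v, ?_, ?_⟩, ?_⟩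
    · rw [mem_young_iff]
      intro m
      have hyj : y (v⁻¹ (d⁻¹ m)) = m := by
        rw [hydef]; simp [Equiv.Perm.mul_apply]
      have h5 := hEps (π⁻¹ (v⁻¹ (d⁻¹ m)))
      rw [show π (π⁻¹ (v⁻¹ (d⁻¹ m))) = v⁻¹ (d⁻¹ m) from π.apply_symm_apply _, hyj] at h5
      exact h5.symm
    · rw [mem_young_iff]
      intro m
      exact hvK m
    · simp [mul_assoc]
    · intro k hk
      have hklt : (⟨k, Nat.lt_of_succ_lt hk⟩ : Fin r) < (⟨k + 1, hk⟩ : Fin r) :=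
        Fin.mk_lt_mk.2 (by omega)
      refine ⟨?_, ?_, ?_, ?_⟩
      · intro hsb
        have h5 := alpha ⟨k, Nat.lt_of_succ_lt hk⟩ ⟨k + 1, hk⟩ hklt hsb
        apply (sw_mul_lt_iff hk π⁻¹).2
        rw [inv_inv]
        exact h5
      · intro hsb
        have h5 := beta ⟨k, Nat.lt_of_succ_lt hk⟩ ⟨k + 1, hk⟩ hklt hsb
        apply (lt_sw_mul_iff hk π⁻¹).2
        rw [inv_inv]
        exact h5
      · intro hsb
        exact (mul_sw_lt_iff hk π⁻¹).2 (gamma ⟨k, Nat.lt_of_succ_lt hk⟩ ⟨k + 1, hk⟩ hklt hsb)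
      · intro hsb
        exact (lt_mul_sw_iff hk π⁻¹).2 (delta ⟨k, Nat.lt_of_succ_lt hk⟩ ⟨k + 1, hk⟩ hklt hsb)
end

section
/- Let λ be a partition of r, and m, n nonnegative integers with m+n > 0. There exists a semistandard λ-supertableau of some content μ|ν with μ a composition with m parts and ν a composition with n parts, if and only if λ_{m+1} ≤ n (i.e., λ lies in the (m,n)-hook). -/
/-- `lam` is a partition of `r`, written as a weakly decreasing function `ℕ → ℕ`
(0-indexed parts) vanishing from index `r` on. -/
def isPartitionOf (r : ℕ) (lam : ℕ → ℕ) : Prop :=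
  Antitone lam ∧ (∑ i ∈ Finset.range r, lam i = r) ∧ lam r = 0

/-- `T` is a semistandard `lam`-supertableau for the hook parameters `(m, n)`:
a filling of the Young diagram of `lam` (cells `(i,j)` with `j < lam i`, rows and
columns 0-indexed) by entries in `{1, ..., m+n}`, weakly increasing along rows and
down columns, such that entries `≤ m` are strictly increasing down columns and entries
`> m` are strictly increasing along rows. -/
def isSuperSSYT (m n : ℕ) (lam : ℕ → ℕ) (T : ℕ → ℕ → ℕ) : Prop :=
  (∀ i j, j < lam i → 1 ≤ T i j ∧ T i j ≤ m + n) ∧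
  (∀ i j j', j ≤ j' → j' < lam i → T i j ≤ T i j') ∧
  (∀ i i' j, i ≤ i' → j < lam i' → T i j ≤ T i' j) ∧
  (∀ i i' j, i < i' → j < lam i' → T i' j ≤ m → T i j < T i' j) ∧
  (∀ i j j', j < j' → j' < lam i → m < T i j → T i j < T i j')

/-- The number of cells of the diagram of `lam` (a partition of `r`) whose entry in the
tableau `T` equals `e`. -/
def entryCount (r : ℕ) (lam : ℕ → ℕ) (T : ℕ → ℕ → ℕ) (e : ℕ) : ℕ :=
  ((Finset.range r ×ˢ Finset.range r).filter
    (fun p => p.2 < lam p.1 ∧ T p.1 p.2 = e)).card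

/-- For a partition `lam` of `r`: there exists a semistandard `lam`-supertableau of some
content `μ|ν` (with `μ` a composition with `m` parts and `ν` one with `n` parts) if and
only if `lam_{m+1} ≤ n` (0-indexed: `lam m ≤ n`), i.e. `lam` lies in the `(m,n)`-hook. -/
theorem stmt7 (m n r : ℕ) (hmn : 0 < m + n) (lam : ℕ → ℕ)
    (hlam : isPartitionOf r lam) :
    (∃ (μ ν : ℕ → ℕ) (T : ℕ → ℕ → ℕ), isSuperSSYT m n lam T ∧
        (∀ k, k < m → entryCount r lam T (k + 1) = μ k) ∧
        (∀ k, k < n → entryCount r lam T (m + k + 1) = ν k))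
    ↔ lam m ≤ n := by
  obtain ⟨hanti, hsum, hr⟩ := hlam
  constructor
  · rintro ⟨μ, ν, T, ⟨h1, h2, h3, h4, h5⟩, -, -⟩
    by_contra h
    push_neg at h
    have hcell : ∀ i j, i ≤ m → j ≤ n → j < lam i := fun i j hi hj =>
      lt_of_lt_of_le (lt_of_le_of_lt hj h) (hanti hi)
    have hcol : ∀ i, i ≤ m → T i 0 ≤ m → i + 1 ≤ T i 0 := by
      intro i
      induction i with
      | zero => intro _ _; exact (h1 0 0 (hcell 0 0 (Nat.zero_le _) (Nat.zero_le _))).1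
      | succ i ih =>
        intro hi hle
        have hi' : i ≤ m := Nat.le_of_succ_le hi
        have hlt := h4 i (i + 1) 0 (Nat.lt_succ_self i)
          (hcell (i + 1) 0 hi (Nat.zero_le _)) hle
        have := ih hi' (le_trans (le_of_lt hlt) hle)
        omega
    have hm0 : m < T m 0 := by
      by_contra hle
      push_neg at hle
      have := hcol m le_rfl hle
      omega
    have hrow : ∀ j, j ≤ n → m + j + 1 ≤ T m j := by
      intro j
      induction j with
      | zero => intro _; omega
      | succ j ih =>
        intro hj
        have hj' : j ≤ n := Nat.le_of_succ_le hj
        have hih := ih hj'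
        have := h5 m j (j + 1) (Nat.lt_succ_self j) (hcell m (j + 1) le_rfl hj) (by omega)
        omega
    have hb := (h1 m n (hcell m n le_rfl le_rfl)).2
    have := hrow n le_rfl
    omega
  · intro hle
    set T : ℕ → ℕ → ℕ := fun i j => if i < m then i + 1 else m + j + 1 with hT
    refine ⟨fun k => entryCount r lam T (k + 1), fun k => entryCount r lam T (m + k + 1),
      T, ⟨?_, ?_, ?_, ?_, ?_⟩, fun _ _ => rfl, fun _ _ => rfl⟩
    · intro i j hj
      by_cases hi : i < m
      · simp only [hT, if_pos hi]; omega
      · have h1 : lam i ≤ lam m := hanti (not_lt.mp hi)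
        simp only [hT, if_neg hi]; omega
    · intro i j j' hjj hj'
      simp only [hT]; split_ifs <;> omega
    · intro i i' j hii hj
      simp only [hT]; split_ifs <;> omega
    · intro i i' j hii hj hTle
      simp only [hT] at hTle ⊢
      split_ifs at hTle ⊢ <;> omega
    · intro i j j' hjj hj' hTm
      simp only [hT] at hTm ⊢
      split_ifs at hTm ⊢ <;> omega
end

section
/- For a partition λ of r with λ_{m+1} ≤ n, there is exactly one semistandard λ-supertableau of content λ'|λ'', where λ' = (λ_1,...,λ_m) and λ'' is the conjugate (transpose) of the partition (λ_{m+1}, λ_{m+2}, ...). -/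
/-- The canonical supertableau. -/
def canonT (m : ℕ) (lam : ℕ → ℕ) (i j : ℕ) : ℕ :=
  if j < lam i then (if i < m then i + 1 else m + j + 1) else 0

section aux

variable {m n r : ℕ} {lam : ℕ → ℕ}

/-- Pointwise lower bound: any super SSYT dominates the canonical one. -/
theorem canon_le (hmono : Antitone lam) {T : ℕ → ℕ → ℕ} (hT : isSuperSSYT m n lam T) :
    ∀ i j, j < lam i → (if i < m then i + 1 else m + j + 1) ≤ T i j := by
  obtain ⟨h1, h2, h3, h4, h5⟩ := hT
  have A : ∀ i, i < m → ∀ j, j < lam i → i + 1 ≤ T i j := by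
    intro i
    induction i with
    | zero => exact fun _ j hj => (h1 0 j hj).1
    | succ i ih =>
      intro hi j hj
      have hj' : j < lam i := lt_of_lt_of_le hj (hmono (Nat.le_succ i))
      have hprev := ih (Nat.lt_of_succ_lt hi) j hj'
      by_cases hle : T (i + 1) j ≤ m
      · have := h4 i (i + 1) j (Nat.lt_succ_self i) hj hle; omega
      · omega
  have B : ∀ i, m ≤ i → ∀ j, j < lam i → m + 1 ≤ T i j := by
    intro i hi j hj
    rcases Nat.eq_zero_or_pos m with hm | hm
    · have := (h1 i j hj).1; omega
    · have hj' : j < lam (m - 1) := lt_of_lt_of_le hj (hmono (by omega))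
      have hA := A (m - 1) (by omega) j hj'
      by_cases hle : T i j ≤ m
      · have := h4 (m - 1) i j (by omega) hj hle; omega
      · omega
  have C : ∀ i, m ≤ i → ∀ j, j < lam i → m + j + 1 ≤ T i j := by
    intro i hi j
    induction j with
    | zero => exact fun hj => B i hi 0 hj
    | succ j ih =>
      intro hj
      have hj' : j < lam i := by omega
      have hB := B i hi j hj'
      have := h5 i j (j + 1) (Nat.lt_succ_self j) hj (by omega)
      have := ih hj'
      omega
  intro i j hj
  by_cases hi : i < m
  · simp only [hi, if_pos]; exact A i hi j hj
  · simp only [hi, if_neg]; exact C i (by omega) j hj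

end aux

/-- For a partition `lam` of `r` with `lam_{m+1} ≤ n` (0-indexed: `lam m ≤ n`), there is
exactly one semistandard `lam`-supertableau of content `λ'|λ''`, where
`λ' = (lam_1, ..., lam_m)` and `λ''` is the conjugate of `(lam_{m+1}, lam_{m+2}, ...)`;
i.e. the entry `k+1 ≤ m` occurs `lam k` times and the entry `m+k+1` occurs
`#{i : lam (m+i) > k}` times.  (We normalize tableaux to vanish outside the diagram.) -/
theorem stmt8 (m n r : ℕ) (hmn : 0 < m + n) (lam : ℕ → ℕ)
    (hlam : isPartitionOf r lam) (hhook : lam m ≤ n) :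
    ∃! T : ℕ → ℕ → ℕ,
      (∀ i j, lam i ≤ j → T i j = 0) ∧ isSuperSSYT m n lam T ∧
      (∀ k, k < m → entryCount r lam T (k + 1) = lam k) ∧
      (∀ k, k < n → entryCount r lam T (m + k + 1)
          = ((Finset.range r).filter (fun i => k < lam (m + i))).card) := by
  obtain ⟨hmono, hsum, hr0⟩ := hlam
  -- basic facts
  have hzero : ∀ i, r ≤ i → lam i = 0 := fun i h => Nat.le_zero.mp (hr0 ▸ hmono h)
  have hltr : ∀ i, 0 < lam i → i < r := by
    intro i h; by_contra hc; have := hzero i (by omega); omega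
  have hler : ∀ i, lam i ≤ r := by
    intro i
    rcases lt_or_ge i r with h | h
    · calc lam i ≤ ∑ i ∈ Finset.range r, lam i :=
        Finset.single_le_sum (fun _ _ => Nat.zero_le _) (Finset.mem_range.mpr h)
      _ = r := hsum
    · rw [hzero i h]; omega
  set cells : Finset (ℕ × ℕ) :=
    (Finset.range r ×ˢ Finset.range r).filter (fun p => p.2 < lam p.1) with hcells
  have hmem : ∀ p : ℕ × ℕ, p ∈ cells ↔ p.2 < lam p.1 := by
    intro p
    simp only [hcells, Finset.mem_filter, Finset.mem_product, Finset.mem_range]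
    constructor
    · tauto
    · intro h
      have h1 : p.1 < r := hltr p.1 (by omega)
      exact ⟨⟨h1, lt_of_lt_of_le h (hler p.1)⟩, h⟩
  have hcount : ∀ (T : ℕ → ℕ → ℕ) (e : ℕ),
      entryCount r lam T e = (cells.filter (fun p => T p.1 p.2 = e)).card := by
    intro T e
    rw [entryCount, hcells, Finset.filter_filter]
  -- the canonical tableau is a valid filling
  have hcanon_ssyt : isSuperSSYT m n lam (canonT m lam) := by
    refine ⟨?_, ?_, ?_, ?_, ?_⟩
    · intro i j hj
      simp only [canonT, if_pos hj]
      by_cases hi : i < m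
      · rw [if_pos hi]; omega
      · rw [if_neg hi]
        have : lam i ≤ lam m := hmono (by omega)
        omega
    · intro i j j' hjj hj'
      have hj : j < lam i := by omega
      simp only [canonT, if_pos hj, if_pos hj']
      by_cases hi : i < m <;> simp only [hi, if_true, if_false] <;> omega
    · intro i i' j hii hj'
      have hj : j < lam i := lt_of_lt_of_le hj' (hmono hii)
      simp only [canonT, if_pos hj, if_pos hj']
      by_cases hi : i < m <;> by_cases hi' : i' < m <;>
        simp only [hi, hi', if_true, if_false] <;> omega
    · intro i i' j hii hj' hle
      have hj : j < lam i := lt_of_lt_of_le hj' (hmono (by omega))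
      have hi' : i' < m := by
        by_contra hc
        simp only [canonT, if_pos hj', hc, if_false] at hle; omega
      have hi : i < m := by omega
      simp only [canonT, if_pos hj, if_pos hj', if_pos hi, if_pos hi']
      omega
    · intro i j j' hjj hj' hgt
      have hj : j < lam i := by omega
      have hi : ¬ i < m := by
        by_contra hc
        simp only [canonT, if_pos hj, if_pos hc] at hgt; omega
      simp only [canonT, if_pos hj, if_pos hj', hi, if_false]
      omega
  -- counts of the canonical tableau
  have hcanon_cnt1 : ∀ k, k < m → entryCount r lam (canonT m lam) (k + 1) = lam k := by
    intro k hk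
    rw [hcount]
    have : cells.filter (fun p => canonT m lam p.1 p.2 = k + 1)
        = (Finset.range (lam k)).map ⟨fun j => ((k, j) : ℕ × ℕ), fun a b h => by
            simpa using h⟩ := by
      ext ⟨i, j⟩
      simp only [Finset.mem_filter, hmem, Finset.mem_map, Finset.mem_range,
        Function.Embedding.coeFn_mk, Prod.mk.injEq]
      constructor
      · rintro ⟨hj, hval⟩
        simp only [canonT, if_pos hj] at hval
        by_cases hi : i < m
        · simp only [hi, if_true] at hval
          have : i = k := by omega
          subst this
          exact ⟨j, hj, rfl⟩
        · simp only [hi, if_false] at hval; omega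
      · rintro ⟨a, ha, rfl, rfl⟩
        refine ⟨ha, ?_⟩
        simp only [canonT, if_pos ha, if_pos hk]
    rw [this, Finset.card_map, Finset.card_range]
  have hcanon_cnt2 : ∀ k, k < n → entryCount r lam (canonT m lam) (m + k + 1)
      = ((Finset.range r).filter (fun i => k < lam (m + i))).card := by
    intro k hk
    rw [hcount]
    have : cells.filter (fun p => canonT m lam p.1 p.2 = m + k + 1)
        = ((Finset.range r).filter (fun i => k < lam (m + i))).map
            ⟨fun i => ((m + i, k) : ℕ × ℕ), fun a b h => by simpa using h⟩ := by
      ext ⟨i, j⟩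
      simp only [Finset.mem_filter, hmem, Finset.mem_map, Finset.mem_range,
        Function.Embedding.coeFn_mk, Prod.mk.injEq]
      constructor
      · rintro ⟨hj, hval⟩
        simp only [canonT, if_pos hj] at hval
        by_cases hi : i < m
        · simp only [hi, if_true] at hval; omega
        · simp only [hi, if_false] at hval
          have hjk : j = k := by omega
          subst hjk
          refine ⟨i - m, ⟨?_, ?_⟩, Prod.ext (show m + (i - m) = i by omega) rfl⟩
          · have : i < r := hltr i (by omega)
            omega
          · have : m + (i - m) = i := by omega
            rw [this]; exact hj
      · rintro ⟨a, ⟨ha, hka⟩, rfl, rfl⟩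
        refine ⟨hka, ?_⟩
        simp only [canonT, if_pos hka]
        have : ¬ m + a < m := by omega
        simp only [this, if_false]
    rw [this, Finset.card_map]
  -- sum over cells identity
  have hsum_count : ∀ T : ℕ → ℕ → ℕ, (∀ p ∈ cells, 1 ≤ T p.1 p.2 ∧ T p.1 p.2 ≤ m + n) →
      ∑ p ∈ cells, T p.1 p.2
        = ∑ e ∈ Finset.Icc 1 (m + n), e * (cells.filter (fun p => T p.1 p.2 = e)).card := by
    intro T hbd
    rw [← Finset.sum_fiberwise_of_maps_to
      (g := fun p => T p.1 p.2) (t := Finset.Icc 1 (m + n))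
      (fun p hp => Finset.mem_Icc.mpr (hbd p hp)) (fun p => T p.1 p.2)]
    refine Finset.sum_congr rfl (fun e _ => ?_)
    rw [Finset.sum_congr rfl (fun p hp => (Finset.mem_filter.mp hp).2),
      Finset.sum_const, smul_eq_mul, mul_comm]
  refine ⟨canonT m lam, ⟨fun i j hij => by simp [canonT, Nat.not_lt.mpr hij],
    hcanon_ssyt, hcanon_cnt1, hcanon_cnt2⟩, ?_⟩
  -- uniqueness
  rintro T ⟨hvanish, hssyt, hc1, hc2⟩
  have hle : ∀ p ∈ cells, canonT m lam p.1 p.2 ≤ T p.1 p.2 := by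
    intro p hp
    have hj := (hmem p).mp hp
    have := canon_le hmono hssyt p.1 p.2 hj
    simpa [canonT, if_pos hj] using this
  have hsums : ∑ p ∈ cells, canonT m lam p.1 p.2 = ∑ p ∈ cells, T p.1 p.2 := by
    rw [hsum_count (canonT m lam) (fun p hp => hcanon_ssyt.1 p.1 p.2 ((hmem p).mp hp)),
      hsum_count T (fun p hp => hssyt.1 p.1 p.2 ((hmem p).mp hp))]
    refine Finset.sum_congr rfl (fun e he => ?_)
    rw [Finset.mem_Icc] at he
    congr 1
    rcases le_or_gt e m with hem | hem
    · have hk : e - 1 < m := by omega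
      have h1 := hc1 (e - 1) hk
      have h2 := hcanon_cnt1 (e - 1) hk
      rw [hcount] at h1 h2
      have he1 : e - 1 + 1 = e := by omega
      rw [he1] at h1 h2
      omega
    · have hk : e - m - 1 < n := by omega
      have h1 := hc2 (e - m - 1) hk
      have h2 := hcanon_cnt2 (e - m - 1) hk
      rw [hcount] at h1 h2
      have he1 : m + (e - m - 1) + 1 = e := by omega
      rw [he1] at h1 h2
      omega
  have heq := (Finset.sum_eq_sum_iff_of_le hle).mp hsums
  funext i j
  by_cases hj : j < lam i
  · exact ((heq (i, j) ((hmem (i, j)).mpr hj))).symm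
  · rw [hvanish i j (by omega)]
    simp [canonT, hj]
end

section
/- Let w ∈ S_r with w ↦ (P(w), Q(w)) under the Robinson–Schensted correspondence. Then the Robinson–Schensted correspondence applied to w^{-1} gives (Q(w), P(w)). -/
/-- Row insertion: insert `x` into a row (weakly increasing list), bumping the first
entry strictly greater than `x`; returns the new row and the bumped entry (if any). -/
def insRow : List ℕ → ℕ → List ℕ × Option ℕ
  | [], x => ([x], none)
  | y :: ys, x =>
    if x < y then (x :: ys, some y)
    else
      let p := insRow ys x
      (y :: p.1, p.2)

/-- Schensted row insertion of `x` into a tableau (list of rows). -/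
def insertT : List (List ℕ) → ℕ → List (List ℕ)
  | [], x => [[x]]
  | row :: rest, x =>
    match insRow row x with
    | (row', none) => row' :: rest
    | (row', some y) => row' :: insertT rest y

/-- Add the label `k` to the recording tableau `Q` at the unique new cell of the
inserted tableau `P'` (the first row where `P'` is longer than `Q`). -/
def record : List (List ℕ) → List (List ℕ) → ℕ → List (List ℕ)
  | _, [], k => [[k]]
  | [], q, _ => q
  | pr :: pt, qr :: qt, k =>
    if qr.length < pr.length then (qr ++ [k]) :: qt else qr :: record pt qt k

/-- The Robinson–Schensted correspondence applied to a word: returns the pair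
`(P, Q)` of the insertion tableau and the recording tableau. -/
def RS (l : List ℕ) : List (List ℕ) × List (List ℕ) :=
  ((l.zipIdx.map (fun p => (p.2, p.1))).map (fun p => (p.1 + 1, p.2))).foldl
    (fun pq kx =>
      let P' := insertT pq.1 kx.2
      (P', record P' pq.2 kx.1)) ([], [])

/-- The word `(w(1), ..., w(r))` of a permutation of `Fin r`, with values in `{1,...,r}`. -/
def word {r : ℕ} (w : Equiv.Perm (Fin r)) : List ℕ :=
  List.ofFn (fun k : Fin r => (w k : ℕ) + 1)


namespace RSaux

def Sh (T : List (List ℕ)) : List ℕ := T.map List.length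

def addRowEnd : List (List ℕ) → ℕ → ℕ → List (List ℕ)
  | [], _, m => [[m]]
  | row :: rest, 0, m => (row ++ [m]) :: rest
  | row :: rest, i+1, m => row :: addRowEnd rest i m

def shInc : List ℕ → ℕ → List ℕ
  | [], _ => [1]
  | n :: ns, 0 => (n+1) :: ns
  | n :: ns, i+1 => n :: shInc ns i

def insIdx : List (List ℕ) → ℕ → ℕ
  | [], _ => 0
  | row :: rest, x =>
    match (insRow row x).2 with
    | none => 0
    | some y => insIdx rest y + 1

def Blt (T : List (List ℕ)) (m : ℕ) : Prop := ∀ row ∈ T, ∀ z ∈ row, z < m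

lemma insRow_app_none {x : ℕ} : ∀ {row : List ℕ}, (∀ z ∈ row, z < x) →
    insRow row x = (row ++ [x], none)
  | [], _ => rfl
  | y :: ys, h => by
    have hy : ¬ x < y := not_lt.2 (le_of_lt (h y (by simp)))
    have ih := insRow_app_none (x := x) (row := ys) (fun z hz => h z (by simp [hz]))
    simp [insRow, hy, ih]

lemma insRow_none_eq : ∀ {row r : List ℕ} {x : ℕ}, insRow row x = (r, none) → r = row ++ [x]
  | [], r, x, h => by simpa [insRow] using h.symm
  | y :: ys, r, x, h => by
    by_cases hy : x < y
    · simp [insRow, hy] at h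
    · simp only [insRow, if_neg hy] at h
      obtain ⟨h1, h2⟩ := Prod.mk.injEq .. ▸ h
      have : insRow ys x = ((insRow ys x).1, none) := by
        rw [← h2]
      have := insRow_none_eq this
      simp [← h1, this]

lemma insRow_some_mem : ∀ {row r : List ℕ} {x y : ℕ}, insRow row x = (r, some y) → y ∈ row
  | [], r, x, y, h => by simp [insRow] at h
  | z :: zs, r, x, y, h => by
    by_cases hz : x < z
    · simp [insRow, hz] at h
      simp [h.2]
    · simp only [insRow, if_neg hz] at h
      obtain ⟨h1, h2⟩ := Prod.mk.injEq .. ▸ h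
      have : insRow zs x = ((insRow zs x).1, some y) := by rw [← h2]
      exact List.mem_cons_of_mem _ (insRow_some_mem this)

lemma insRow_some_length : ∀ {row r : List ℕ} {x y : ℕ}, insRow row x = (r, some y) →
    r.length = row.length
  | [], r, x, y, h => by simp [insRow] at h
  | z :: zs, r, x, y, h => by
    by_cases hz : x < z
    · simp only [insRow, if_pos hz] at h
      obtain ⟨h1, h2⟩ := Prod.mk.injEq .. ▸ h
      simp [← h1]
    · simp only [insRow, if_neg hz] at h
      obtain ⟨h1, h2⟩ := Prod.mk.injEq .. ▸ h
      have : insRow zs x = ((insRow zs x).1, some y) := by rw [← h2]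
      have := insRow_some_length this
      simp [← h1, this]

lemma insRow_mem : ∀ {row : List ℕ} {x z : ℕ}, z ∈ (insRow row x).1 → z ∈ row ∨ z = x
  | [], x, z, h => by simp [insRow] at h; simp [h]
  | y :: ys, x, z, h => by
    by_cases hy : x < y
    · simp [insRow, hy] at h
      rcases h with h | h
      · exact Or.inr h
      · exact Or.inl (by simp [h])
    · simp only [insRow, if_neg hy, List.mem_cons] at h
      rcases h with h | h
      · exact Or.inl (by simp [h])
      · rcases insRow_mem h with h' | h'
        · exact Or.inl (by simp [h'])
        · exact Or.inr h'

lemma insRow_cons {z x : ℕ} {zs r0 : List ℕ} {o : Option ℕ} (hz : ¬ x < z)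
    (h : insRow zs x = (r0, o)) : insRow (z :: zs) x = (z :: r0, o) := by
  simp [insRow, hz, h]

lemma insRow_append_some {row r : List ℕ} {x y m : ℕ} (h : insRow row x = (r, some y)) :
    insRow (row ++ [m]) x = (r ++ [m], some y) := by
  induction row generalizing r with
  | nil => simp [insRow] at h
  | cons z zs ih =>
    by_cases hz : x < z
    · simp only [insRow, if_pos hz] at h
      obtain ⟨h1, h2⟩ := Prod.mk.injEq .. ▸ h
      obtain rfl : z = y := Option.some.inj h2
      simp [insRow, hz, ← h1]
    · rcases hzs : insRow zs x with ⟨r0, o⟩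
      rw [insRow_cons hz hzs] at h
      obtain ⟨h1, h2⟩ := Prod.mk.injEq .. ▸ h
      subst h2
      have := ih hzs
      rw [List.cons_append, insRow_cons hz this, ← h1]
      simp

lemma insRow_append_none {row r : List ℕ} {x m : ℕ} (hx : x < m)
    (h : insRow row x = (r, none)) : insRow (row ++ [m]) x = (r, some m) := by
  have hr := insRow_none_eq h
  subst hr
  induction row with
  | nil =>
    simp [insRow, hx]
  | cons z zs ih =>
    by_cases hz : x < z
    · simp [insRow, hz] at h
    · rcases hzs : insRow zs x with ⟨r0, o⟩
      rw [insRow_cons hz hzs] at h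
      obtain ⟨h1, h2⟩ := Prod.mk.injEq .. ▸ h
      subst h2
      have hzs' : insRow zs x = (zs ++ [x], none) := by
        rw [hzs, insRow_none_eq hzs]
      have := ih hzs'
      rw [List.cons_append, insRow_cons hz this]
      simp

lemma insertT_cons_some {row r' : List ℕ} {rest : List (List ℕ)} {x y : ℕ}
    (h : insRow row x = (r', some y)) :
    insertT (row :: rest) x = r' :: insertT rest y := by
  simp [insertT, h]

lemma insertT_cons_none {row r' : List ℕ} {rest : List (List ℕ)} {x : ℕ}
    (h : insRow row x = (r', none)) :
    insertT (row :: rest) x = r' :: rest := by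
  simp [insertT, h]

lemma insIdx_cons_some {row r' : List ℕ} {rest : List (List ℕ)} {x y : ℕ}
    (h : insRow row x = (r', some y)) :
    insIdx (row :: rest) x = insIdx rest y + 1 := by
  simp [insIdx, h]

lemma insIdx_cons_none {row r' : List ℕ} {rest : List (List ℕ)} {x : ℕ}
    (h : insRow row x = (r', none)) :
    insIdx (row :: rest) x = 0 := by
  simp [insIdx, h]

lemma Blt.head {row : List ℕ} {rest : List (List ℕ)} {m : ℕ}
    (h : Blt (row :: rest) m) : ∀ z ∈ row, z < m := h row (by simp)

lemma Blt.tail {row : List ℕ} {rest : List (List ℕ)} {m : ℕ}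
    (h : Blt (row :: rest) m) : Blt rest m := fun r hr => h r (by simp [hr])

lemma blt_nil {m : ℕ} : Blt [] m := by intro r hr; simp at hr

lemma blt_cons {row : List ℕ} {rest : List (List ℕ)} {m : ℕ}
    (h1 : ∀ z ∈ row, z < m) (h2 : Blt rest m) : Blt (row :: rest) m := by
  intro r hr
  rcases List.mem_cons.1 hr with rfl | hr
  · exact h1
  · exact h2 r hr

lemma blt_insertT {T : List (List ℕ)} {x m : ℕ} (hT : Blt T m) (hx : x < m) :
    Blt (insertT T x) m := by
  induction T generalizing x with
  | nil =>
    simp only [insertT]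
    exact blt_cons (by simpa using hx) blt_nil
  | cons row rest ih =>
    rcases h : insRow row x with ⟨r', o⟩
    have hr' : ∀ z ∈ r', z < m := by
      intro z hz
      have : z ∈ (insRow row x).1 := by rw [h]; exact hz
      rcases insRow_mem this with h' | rfl
      · exact hT.head z h'
      · exact hx
    cases o with
    | none =>
      rw [insertT_cons_none h]
      exact blt_cons hr' hT.tail
    | some y =>
      rw [insertT_cons_some h]
      have hy : y < m := hT.head y (insRow_some_mem h)
      exact blt_cons hr' (ih hT.tail hy)

lemma insertT_max {T : List (List ℕ)} {m : ℕ} (hT : Blt T m) :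
    insertT T m = addRowEnd T 0 m ∧ insIdx T m = 0 := by
  cases T with
  | nil => exact ⟨rfl, rfl⟩
  | cons row rest =>
    have h := insRow_app_none (x := m) (row := row) hT.head
    exact ⟨insertT_cons_none h, insIdx_cons_none h⟩

lemma insIdx_le : ∀ (T : List (List ℕ)) (x : ℕ), insIdx T x ≤ T.length
  | [], _ => le_refl _
  | row :: rest, x => by
    rcases h : insRow row x with ⟨r', o⟩
    cases o with
    | none => rw [insIdx_cons_none h]; simp
    | some y =>
      rw [insIdx_cons_some h]
      simpa using insIdx_le rest y

lemma insIdx_lt_length_insertT : ∀ (T : List (List ℕ)) (x : ℕ),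
    insIdx T x < (insertT T x).length
  | [], x => by simp [insIdx, insertT]
  | row :: rest, x => by
    rcases h : insRow row x with ⟨r', o⟩
    cases o with
    | none => rw [insIdx_cons_none h, insertT_cons_none h]; simp
    | some y =>
      rw [insIdx_cons_some h, insertT_cons_some h]
      simpa using insIdx_lt_length_insertT rest y

lemma length_le_insertT : ∀ (T : List (List ℕ)) (x : ℕ), T.length ≤ (insertT T x).length
  | [], x => by simp [insertT]
  | row :: rest, x => by
    rcases h : insRow row x with ⟨r', o⟩
    cases o with
    | none => rw [insertT_cons_none h]; simp
    | some y =>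
      rw [insertT_cons_some h]
      simpa using length_le_insertT rest y

lemma blt_addRowEnd {T : List (List ℕ)} {K m i : ℕ} (hT : Blt T K) (hm : m < K) :
    Blt (addRowEnd T i m) K := by
  induction T generalizing i with
  | nil =>
    simp only [addRowEnd]
    exact blt_cons (by simpa using hm) blt_nil
  | cons row rest ih =>
    cases i with
    | zero =>
      simp only [addRowEnd]
      refine blt_cons ?_ hT.tail
      intro z hz
      rcases List.mem_append.1 hz with h | h
      · exact hT.head z h
      · simp at h; subst h; exact hm
    | succ i =>
      simp only [addRowEnd]
      exact blt_cons hT.head (ih hT.tail)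

lemma sh_addRowEnd : ∀ (T : List (List ℕ)) (i m : ℕ),
    Sh (addRowEnd T i m) = shInc (Sh T) i
  | [], i, m => by cases i <;> simp [addRowEnd, Sh, shInc]
  | row :: rest, 0, m => by simp [addRowEnd, Sh, shInc]
  | row :: rest, i+1, m => by
    have := sh_addRowEnd rest i m
    simp only [Sh] at this
    simp only [addRowEnd, Sh, List.map_cons, shInc, this]

lemma sh_insertT : ∀ (T : List (List ℕ)) (x : ℕ),
    Sh (insertT T x) = shInc (Sh T) (insIdx T x)
  | [], x => by simp [insertT, insIdx, Sh, shInc]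
  | row :: rest, x => by
    rcases h : insRow row x with ⟨r', o⟩
    cases o with
    | none =>
      rw [insertT_cons_none h, insIdx_cons_none h]
      have := insRow_none_eq h
      subst this
      simp [Sh, shInc]
    | some y =>
      rw [insertT_cons_some h, insIdx_cons_some h]
      simp [Sh, shInc, insRow_some_length h]
      exact sh_insertT rest y

lemma addRowEnd_comm : ∀ (T : List (List ℕ)) (i j a b : ℕ), i < j → j ≤ T.length →
    addRowEnd (addRowEnd T i a) j b = addRowEnd (addRowEnd T j b) i a
  | [], i, j, a, b, hij, hj => by simp at hj; omega
  | row :: rest, 0, j+1, a, b, hij, hj => by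
    simp [addRowEnd]
  | row :: rest, i+1, j+1, a, b, hij, hj => by
    simp only [addRowEnd]
    rw [addRowEnd_comm rest i j a b (by omega) (by simpa using hj)]

lemma getD_addRowEnd_ne : ∀ (T : List (List ℕ)) (i j m : ℕ), j ≤ T.length → i ≠ j →
    (addRowEnd T j m).getD i [] = T.getD i []
  | [], i, j, m, hj, hij => by
    obtain rfl : j = 0 := Nat.le_zero.mp (by simpa using hj)
    cases i with
    | zero => exact absurd rfl hij
    | succ i => simp [addRowEnd]
  | row :: rest, i, 0, m, hj, hij => by
    cases i with
    | zero => exact absurd rfl hij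
    | succ i => simp [addRowEnd]
  | row :: rest, i, j+1, m, hj, hij => by
    cases i with
    | zero => simp [addRowEnd]
    | succ i =>
      simp only [addRowEnd, List.getD_cons_succ]
      exact getD_addRowEnd_ne rest i j m (by simpa using hj) (by omega)

lemma blt_getD {T : List (List ℕ)} {K : ℕ} (hT : Blt T K) (i : ℕ) :
    ∀ e ∈ T.getD i [], e < K := by
  induction T generalizing i with
  | nil => simp
  | cons row rest ih =>
    cases i with
    | zero => simpa using hT.head
    | succ i => simpa using ih hT.tail i

lemma record_eq : ∀ (T Q : List (List ℕ)) (x k : ℕ), Sh Q = Sh T →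
    record (insertT T x) Q k = addRowEnd Q (insIdx T x) k
  | [], Q, x, k, h => by
    have : Q = [] := by simpa [Sh] using h
    subst this
    simp [insertT, record, insIdx, addRowEnd]
  | row :: rest, Q, x, k, h => by
    rcases Q with _ | ⟨qr, qt⟩
    · simp [Sh] at h
    · have hlen : qr.length = row.length ∧ Sh qt = Sh rest := by
        simpa [Sh] using h
      rcases hins : insRow row x with ⟨r', o⟩
      cases o with
      | none =>
        have hr' := insRow_none_eq hins
        subst hr'
        rw [insertT_cons_none hins, insIdx_cons_none hins]
        have : qr.length < (row ++ [x]).length := by simp [hlen.1]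
        simp only [record, if_pos this, addRowEnd]
      | some y =>
        rw [insertT_cons_some hins, insIdx_cons_some hins]
        have hl : ¬ qr.length < r'.length := by
          rw [insRow_some_length hins, hlen.1]
          exact lt_irrefl _
        simp only [record, if_neg hl, addRowEnd]
        rw [record_eq rest qt y k hlen.2]

lemma insertT_addRowEnd {m : ℕ} (T : List (List ℕ)) (i x : ℕ)
    (hx : x < m) (hB : Blt T m) (hi : i ≤ T.length) :
    insertT (addRowEnd T i m) x =
      addRowEnd (insertT T x) (if insIdx T x = i then i + 1 else i) m
    ∧ insIdx (addRowEnd T i m) x = (if insIdx T x = i then i + 1 else insIdx T x) := by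
  induction T generalizing i x with
  | nil =>
    obtain rfl : i = 0 := Nat.le_zero.mp (by simpa using hi)
    have h1 : insRow [m] x = ([x], some m) := by simp [insRow, hx]
    have h2 : addRowEnd ([] : List (List ℕ)) 0 m = [[m]] := rfl
    rw [h2, insertT_cons_some h1, insIdx_cons_some h1]
    simp [insertT, insIdx, addRowEnd]
  | cons row rest ih =>
    rcases hins : insRow row x with ⟨r', o⟩
    cases i with
    | zero =>
      have h0 : addRowEnd (row :: rest) 0 m = (row ++ [m]) :: rest := rfl
      cases o with
      | some y =>
        have h1 := insRow_append_some (m := m) hins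
        rw [h0, insertT_cons_some h1, insIdx_cons_some h1,
          insertT_cons_some hins, insIdx_cons_some hins]
        simp [addRowEnd]
      | none =>
        have hr' := insRow_none_eq hins
        subst hr'
        have h1 := insRow_append_none hx hins
        have hmax := insertT_max (m := m) hB.tail
        rw [h0, insertT_cons_some h1, insIdx_cons_some h1,
          insertT_cons_none hins, insIdx_cons_none hins, hmax.1, hmax.2]
        simp [addRowEnd]
    | succ i =>
      have h0 : addRowEnd (row :: rest) (i+1) m = row :: addRowEnd rest i m := rfl
      cases o with
      | none =>
        rw [h0, insertT_cons_none hins, insIdx_cons_none hins,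
          insertT_cons_none hins, insIdx_cons_none hins]
        simp [addRowEnd]
      | some y =>
        have hy : y < m := hB.head y (insRow_some_mem hins)
        have hii : i ≤ rest.length := by simpa using hi
        have IH := ih i y hy hB.tail hii
        rw [h0, insertT_cons_some hins, insIdx_cons_some hins,
          insertT_cons_some hins, insIdx_cons_some hins, IH.1, IH.2]
        by_cases hc : insIdx rest y = i
        · simp [hc, addRowEnd]
        · have hc' : ¬ (insIdx rest y + 1 = i + 1) := by omega
          simp [hc, hc', addRowEnd]

inductive PartIns : List (List ℕ) → ℕ → ℕ → List (List ℕ) → ℕ → Prop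
  | zero (T : List (List ℕ)) (x : ℕ) : PartIns T x 0 T x
  | succ {row r' : List ℕ} {rest U : List (List ℕ)} {x y c i : ℕ} :
      insRow row x = (r', some y) → PartIns rest y i U c →
      PartIns (row :: rest) x (i+1) (r' :: U) c

lemma PartIns.sh {T U : List (List ℕ)} {x i c : ℕ} (h : PartIns T x i U c) :
    Sh U = Sh T := by
  induction h with
  | zero => rfl
  | succ hins _ ih => simp [Sh, insRow_some_length hins]; simpa [Sh] using ih

lemma PartIns.finish {T U : List (List ℕ)} {x i c : ℕ} (h : PartIns T x i U c)
    (hc : ∀ e ∈ T.getD i [], e < c) :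
    insertT T x = addRowEnd U i c ∧ insIdx T x = i := by
  induction h with
  | zero T x =>
    cases T with
    | nil => exact ⟨rfl, rfl⟩
    | cons row rest =>
      have h1 : insRow row x = (row ++ [x], none) :=
        insRow_app_none (by simpa using hc)
      exact ⟨insertT_cons_none h1, insIdx_cons_none h1⟩
  | succ hins htail ih =>
    rename_i row r0 rest U x y c i
    have hc' : ∀ e ∈ rest.getD i [], e < c := by simpa using hc
    obtain ⟨e1, e2⟩ := ih hc'
    rw [insertT_cons_some hins, insIdx_cons_some hins, e1, e2]
    exact ⟨rfl, rfl⟩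

lemma PartIns.extend {T U : List (List ℕ)} {x i c k : ℕ} (h : PartIns T x i U c)
    (hck : c < k) (hrow : ∀ e ∈ T.getD i [], e < c) :
    PartIns (addRowEnd T i k) x (i+1) (addRowEnd U i c) k := by
  induction h with
  | zero T x =>
    cases T with
    | nil =>
      have h1 : insRow [k] x = ([x], some k) := by simp [insRow, hck]
      exact PartIns.succ h1 (PartIns.zero [] k)
    | cons row rest =>
      have h0 : insRow row x = (row ++ [x], none) :=
        insRow_app_none (by simpa using hrow)
      have h1 : insRow (row ++ [k]) x = (row ++ [x], some k) :=
        insRow_append_none hck h0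
      exact PartIns.succ h1 (PartIns.zero rest k)
  | succ hins htail ih =>
    rename_i row r0 rest U x y c i
    have hrow' : ∀ e ∈ rest.getD i [], e < c := by simpa using hrow
    exact PartIns.succ hins (ih hck hrow')

lemma PartIns.stable_lt {T U : List (List ℕ)} {x i c k : ℕ} (h : PartIns T x i U c) :
    ∀ j, j < i → x < k → Blt T k →
    PartIns (addRowEnd T j k) x i (addRowEnd U j k) c := by
  induction h with
  | zero T x => intro j hj; omega
  | succ hins htail ih =>
    intro j hj hx hB
    rename_i row r' rest U x y c i
    cases j with
    | zero =>
      have h1 := insRow_append_some (m := k) hins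
      exact PartIns.succ h1 htail
    | succ j =>
      have hy : y < k := hB.head y (insRow_some_mem hins)
      exact PartIns.succ hins (ih j (by omega) hy hB.tail)

lemma PartIns.stable_gt {T U : List (List ℕ)} {x i c k : ℕ} (h : PartIns T x i U c) :
    ∀ j, i < j → PartIns (addRowEnd T j k) x i (addRowEnd U j k) c := by
  induction h with
  | zero T x => intro j _; exact PartIns.zero _ x
  | succ hins htail ih =>
    intro j hj
    cases j with
    | zero => omega
    | succ j => exact PartIns.succ hins (ih j (by omega))

def step (pq : List (List ℕ) × List (List ℕ)) (kx : ℕ × ℕ) :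
    List (List ℕ) × List (List ℕ) :=
  let P' := insertT pq.1 kx.2
  (P', record P' pq.2 kx.1)

lemma record_nil2 (P : List (List ℕ)) (k : ℕ) : record P [] k = [[k]] := by
  cases P <;> rfl

lemma blt_record {Q : List (List ℕ)} {K k : ℕ} (P : List (List ℕ))
    (hQ : Blt Q K) (hk : k < K) : Blt (record P Q k) K := by
  induction P generalizing Q with
  | nil =>
    cases Q with
    | nil => rw [record_nil2]; exact blt_cons (by simpa using hk) blt_nil
    | cons qr qt => exact hQ
  | cons pr pt ih =>
    cases Q with
    | nil => rw [record_nil2]; exact blt_cons (by simpa using hk) blt_nil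
    | cons qr qt =>
      show Blt (if qr.length < pr.length then (qr ++ [k]) :: qt else qr :: record pt qt k) K
      split
      · refine blt_cons ?_ hQ.tail
        intro z hz
        rcases List.mem_append.1 hz with h | h
        · exact hQ.head z h
        · simp at h; subst h; exact hk
      · exact blt_cons hQ.head (ih hQ.tail)

lemma run_P_blt : ∀ (s : List (ℕ × ℕ)) (P Q : List (List ℕ)) (a : ℕ),
    Blt P a → (∀ p ∈ s, p.2 < a) → Blt ((s.foldl step (P, Q)).1) a
  | [], P, Q, a, hP, _ => hP
  | (k, x) :: s, P, Q, a, hP, hs => by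
    simp only [List.foldl_cons]
    exact run_P_blt s _ _ a (blt_insertT hP (hs (k, x) (by simp)))
      (fun p hp => hs p (by simp [hp]))

lemma run_Q_blt : ∀ (s : List (ℕ × ℕ)) (P Q : List (List ℕ)) (K : ℕ),
    Blt Q K → (∀ p ∈ s, p.1 < K) → Blt ((s.foldl step (P, Q)).2) K
  | [], P, Q, K, hQ, _ => hQ
  | (k, x) :: s, P, Q, K, hQ, hs => by
    simp only [List.foldl_cons]
    exact run_Q_blt s _ _ K (blt_record _ hQ (hs (k, x) (by simp)))
      (fun p hp => hs p (by simp [hp]))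

lemma run_sh : ∀ (s : List (ℕ × ℕ)) (P Q : List (List ℕ)),
    Sh P = Sh Q → Sh ((s.foldl step (P, Q)).1) = Sh ((s.foldl step (P, Q)).2)
  | [], P, Q, h => h
  | (k, x) :: s, P, Q, h => by
    simp only [List.foldl_cons]
    refine run_sh s _ _ ?_
    show Sh (insertT P x) = Sh (record (insertT P x) Q k)
    rw [record_eq P Q x k h.symm, sh_insertT, sh_addRowEnd, h]

lemma run_inv : ∀ (s : List (ℕ × ℕ)) (P₂ Q₂ U : List (List ℕ)) (a b c i : ℕ),
    Blt P₂ a → (∀ p ∈ s, p.2 < a) →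
    List.Pairwise (· < ·) (s.map Prod.fst) →
    (∀ p ∈ s, Blt Q₂ p.1) → (∀ p ∈ s, c < p.1) → (∀ p ∈ s, b < p.1) →
    Sh P₂ = Sh Q₂ → PartIns Q₂ b i U c → (∀ e ∈ Q₂.getD i [], e < c) →
    i ≤ P₂.length →
    s.foldl step (addRowEnd P₂ i a, addRowEnd U i c) =
      (addRowEnd ((s.foldl step (P₂, Q₂)).1) (insIdx ((s.foldl step (P₂, Q₂)).2) b) a,
       insertT ((s.foldl step (P₂, Q₂)).2) b)
  | [], P₂, Q₂, U, a, b, c, i, hBP, hvals, hsort, hlab, hc, hb, hSh, hPI, hrow, hiP => by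
    obtain ⟨e1, e2⟩ := hPI.finish hrow
    simp only [List.foldl_nil]
    rw [e1, e2]
  | (k, x) :: s, P₂, Q₂, U, a, b, c, i,
      hBP, hvals, hsort, hlab, hc, hb, hSh, hPI, hrow, hiP => by
    have hxa : x < a := hvals (k, x) (by simp)
    have hkQ : Blt Q₂ k := hlab (k, x) (by simp)
    have hck : c < k := hc (k, x) (by simp)
    have hbk : b < k := hb (k, x) (by simp)
    have hsc := List.pairwise_cons.mp (by simpa using hsort :
      List.Pairwise (· < ·) (k :: s.map Prod.fst))
    have hsort' : List.Pairwise (· < ·) (s.map Prod.fst) := hsc.2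
    have hklt : ∀ p ∈ s, k < p.1 := fun p hp =>
      hsc.1 p.1 (List.mem_map_of_mem hp)
    have lenPQ : P₂.length = Q₂.length := by
      have := congrArg List.length hSh; simpa [Sh] using this
    have lenUQ : U.length = Q₂.length := by
      have := congrArg List.length hPI.sh; simpa [Sh] using this
    have hjle : insIdx P₂ x ≤ Q₂.length := lenPQ ▸ insIdx_le P₂ x
    have L3 := insertT_addRowEnd (m := a) P₂ i x hxa hBP hiP
    have hShU : Sh (addRowEnd U i c) = Sh (addRowEnd P₂ i a) := by
      rw [sh_addRowEnd, sh_addRowEnd, hPI.sh, hSh]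
    have hstep1 : step (addRowEnd P₂ i a, addRowEnd U i c) (k, x)
        = (addRowEnd (insertT P₂ x) (if insIdx P₂ x = i then i + 1 else i) a,
           addRowEnd (addRowEnd U i c)
             (if insIdx P₂ x = i then i + 1 else insIdx P₂ x) k) := by
      show (insertT (addRowEnd P₂ i a) x,
        record (insertT (addRowEnd P₂ i a) x) (addRowEnd U i c) k) = _
      rw [record_eq _ _ x k hShU, L3.2, L3.1]
    have hstep2 : step (P₂, Q₂) (k, x) = (insertT P₂ x, addRowEnd Q₂ (insIdx P₂ x) k) := by
      show (insertT P₂ x, record (insertT P₂ x) Q₂ k) = _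
      rw [record_eq P₂ Q₂ x k hSh.symm]
    simp only [List.foldl_cons]
    rw [hstep1, hstep2]
    have hvals' : ∀ p ∈ s, p.2 < a := fun p hp => hvals p (by simp [hp])
    have hBP' : Blt (insertT P₂ x) a := blt_insertT hBP hxa
    have hb' : ∀ p ∈ s, b < p.1 := fun p hp => hb p (by simp [hp])
    have hlab' : ∀ p ∈ s, Blt (addRowEnd Q₂ (insIdx P₂ x) k) p.1 := fun p hp =>
      blt_addRowEnd (hlab p (by simp [hp])) (hklt p hp)
    have hSh' : Sh (insertT P₂ x) = Sh (addRowEnd Q₂ (insIdx P₂ x) k) := by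
      rw [sh_insertT, sh_addRowEnd, hSh]
    by_cases hji : insIdx P₂ x = i
    · rw [hji]
      simp only [if_pos rfl]
      rw [hji] at hSh' hlab'
      have hPI' : PartIns (addRowEnd Q₂ i k) b (i + 1) (addRowEnd U i c) k :=
        hPI.extend hck hrow
      have hrow' : ∀ e ∈ (addRowEnd Q₂ i k).getD (i + 1) [], e < k := by
        rw [getD_addRowEnd_ne Q₂ (i + 1) i k (hji ▸ hjle) (by omega)]
        exact blt_getD hkQ (i + 1)
      have hi' : i + 1 ≤ (insertT P₂ x).length := by
        have := insIdx_lt_length_insertT P₂ x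
        omega
      exact run_inv s (insertT P₂ x) (addRowEnd Q₂ i k) (addRowEnd U i c) a b k (i + 1)
        hBP' hvals' hsort' hlab' hklt hb' hSh' hPI' hrow' hi'
    · rw [if_neg hji, if_neg hji]
      have hiU : i ≤ U.length := by omega
      have hjU : insIdx P₂ x ≤ U.length := by omega
      have hcomm : addRowEnd (addRowEnd U i c) (insIdx P₂ x) k
          = addRowEnd (addRowEnd U (insIdx P₂ x) k) i c := by
        rcases lt_or_gt_of_ne hji with hlt | hgt
        · exact (addRowEnd_comm U (insIdx P₂ x) i k c hlt hiU).symm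
        · exact addRowEnd_comm U i (insIdx P₂ x) c k hgt hjU
      rw [hcomm]
      have hPI' : PartIns (addRowEnd Q₂ (insIdx P₂ x) k) b i
          (addRowEnd U (insIdx P₂ x) k) c := by
        rcases lt_or_gt_of_ne hji with hlt | hgt
        · exact hPI.stable_lt _ hlt hbk hkQ
        · exact hPI.stable_gt _ hgt
      have hrow' : ∀ e ∈ (addRowEnd Q₂ (insIdx P₂ x) k).getD i [], e < c := by
        rw [getD_addRowEnd_ne Q₂ i (insIdx P₂ x) k hjle (Ne.symm hji)]
        exact hrow
      have hi' : i ≤ (insertT P₂ x).length := le_trans hiP (length_le_insertT P₂ x)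
      exact run_inv s (insertT P₂ x) (addRowEnd Q₂ (insIdx P₂ x) k)
        (addRowEnd U (insIdx P₂ x) k) a b c i
        hBP' hvals' hsort' hlab' (fun p hp => hc p (by simp [hp])) hb' hSh' hPI' hrow' hi'

theorem main_general : ∀ (l u : List (ℕ × ℕ)),
    List.Pairwise (· < ·) (l.map Prod.fst) →
    List.Pairwise (· < ·) (u.map Prod.fst) →
    u.Perm (l.map Prod.swap) →
    u.foldl step ([], []) = ((l.foldl step ([], [])).2, (l.foldl step ([], [])).1) := by
  intro l
  induction l using List.reverseRecOn with
  | nil =>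
    intro u _ _ hperm
    have : u = [] := by simpa using hperm.eq_nil
    subst this
    rfl
  | append_singleton l' p ih =>
    obtain ⟨a, b⟩ := p
    intro u hsl hsu hperm
    have hmapl : (l' ++ [(a, b)]).map Prod.fst = l'.map Prod.fst ++ [a] := by simp
    rw [hmapl] at hsl
    obtain ⟨hsl', hsa', hafst⟩ := List.pairwise_append.mp hsl
    have hafst' : ∀ f ∈ l'.map Prod.fst, f < a := fun f hf => hafst f hf a (by simp)
    have hmem : (b, a) ∈ u := by
      rw [hperm.mem_iff]
      simp
    obtain ⟨t1, t2, rfl⟩ := List.append_of_mem hmem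
    have hperm' : (t1 ++ t2).Perm (l'.map Prod.swap) := by
      have h1 : ((b, a) :: (t1 ++ t2)).Perm ((l'.map Prod.swap) ++ [(b, a)]) :=
        List.perm_middle.symm.trans (by simpa using hperm)
      have h2 : ((l'.map Prod.swap) ++ [(b, a)]).Perm ((b, a) :: l'.map Prod.swap) :=
        List.perm_append_singleton _ _
      exact (h1.trans h2).cons_inv
    have hmapu : (t1 ++ (b, a) :: t2).map Prod.fst
        = t1.map Prod.fst ++ b :: t2.map Prod.fst := by simp
    rw [hmapu] at hsu
    obtain ⟨hs1, hs2, hcross⟩ := List.pairwise_append.mp hsu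
    obtain ⟨hb2, hs2'⟩ := List.pairwise_cons.mp hs2
    have ht1b : ∀ f ∈ t1.map Prod.fst, f < b := fun f hf => hcross f hf b (by simp)
    have hsort12 : List.Pairwise (· < ·) ((t1 ++ t2).map Prod.fst) := by
      rw [List.map_append]
      exact List.pairwise_append.mpr
        ⟨hs1, hs2', fun f hf g hg => hcross f hf g (by simp [hg])⟩
    have IH := ih (t1 ++ t2) hsl' hsort12 hperm'
    -- values of t1 ++ t2 are < a
    have hvals : ∀ p ∈ t1 ++ t2, p.2 < a := by
      intro p hp
      have hp' : p ∈ l'.map Prod.swap := hperm'.subset hp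
      obtain ⟨q, hq, rfl⟩ := List.mem_map.1 hp'
      exact hafst' q.1 (List.mem_map_of_mem hq)
    set Pt := (t1.foldl step (([] : List (List ℕ)), ([] : List (List ℕ)))).1 with hPt
    set Qt := (t1.foldl step (([] : List (List ℕ)), ([] : List (List ℕ)))).2 with hQt
    have hBPt : Blt Pt a :=
      run_P_blt t1 [] [] a blt_nil (fun p hp => hvals p (by simp [hp]))
    have hBQt : ∀ K, (∀ p ∈ t1, p.1 < K) → Blt Qt K := fun K hK =>
      run_Q_blt t1 [] [] K blt_nil hK
    have hBQtb : Blt Qt b := hBQt b (fun p hp => ht1b p.1 (List.mem_map_of_mem hp))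
    have hShT : Sh Pt = Sh Qt := run_sh t1 [] [] rfl
    have hmax := insertT_max (m := a) hBPt
    have hfold : (t1 ++ (b, a) :: t2).foldl step (([] : List (List ℕ)), ([] : List (List ℕ)))
        = t2.foldl step (addRowEnd Pt 0 a, addRowEnd Qt 0 b) := by
      rw [List.foldl_append, List.foldl_cons]
      congr 1
      show (insertT Pt a, record (insertT Pt a) Qt b) = _
      rw [record_eq Pt Qt a b hShT.symm, hmax.1, hmax.2]
    have hrinv := run_inv t2 Pt Qt Qt a b b 0 hBPt
      (fun p hp => hvals p (by simp [hp])) hs2'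
      (fun p hp => hBQt p.1 (fun q hq => lt_trans (ht1b q.1 (List.mem_map_of_mem hq))
        (hb2 p.1 (List.mem_map_of_mem hp))))
      (fun p hp => hb2 p.1 (List.mem_map_of_mem hp))
      (fun p hp => hb2 p.1 (List.mem_map_of_mem hp))
      hShT (PartIns.zero Qt b) (blt_getD hBQtb 0) (Nat.zero_le _)
    have hF : t2.foldl step (Pt, Qt)
        = ((l'.foldl step ([], [])).2, (l'.foldl step ([], [])).1) := by
      rw [← IH, List.foldl_append]
    rw [hfold, hrinv, hF]
    have hShl : Sh ((l'.foldl step ([], [])).1) = Sh ((l'.foldl step ([], [])).2) :=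
      run_sh l' [] [] rfl
    rw [List.foldl_append, List.foldl_cons, List.foldl_nil]
    show _ = ((step (l'.foldl step ([], [])) (a, b)).2, (step (l'.foldl step ([], [])) (a, b)).1)
    have : step (l'.foldl step ([], [])) (a, b)
        = (insertT (l'.foldl step ([], [])).1 b,
           addRowEnd (l'.foldl step ([], [])).2
             (insIdx (l'.foldl step ([], [])).1 b) a) := by
      show (insertT (l'.foldl step ([], [])).1 b,
        record (insertT (l'.foldl step ([], [])).1 b) (l'.foldl step ([], [])).2 a) = _
      rw [record_eq _ _ b a hShl.symm]
    rw [this]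

def pairsOf {r : ℕ} (w : Equiv.Perm (Fin r)) : List (ℕ × ℕ) :=
  List.ofFn (fun k : Fin r => ((k : ℕ) + 1, (w k : ℕ) + 1))

lemma pairs_word {r : ℕ} (w : Equiv.Perm (Fin r)) :
    (((word w).zipIdx.map (fun p => (p.2, p.1))).map (fun p => (p.1 + 1, p.2))) = pairsOf w := by
  apply List.ext_getElem
  · simp [word, pairsOf]
  · intro i h1 h2
    have hi : i < r := by simpa [pairsOf] using h2
    simp [word, pairsOf, List.getElem_zipIdx, List.getElem_ofFn]

lemma sorted_pairsOf {r : ℕ} (w : Equiv.Perm (Fin r)) :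
    List.Pairwise (· < ·) ((pairsOf w).map Prod.fst) := by
  rw [pairsOf, List.map_ofFn]
  rw [List.pairwise_ofFn]
  intro i j hij
  simpa using hij

lemma perm_pairsOf {r : ℕ} (w : Equiv.Perm (Fin r)) :
    (pairsOf w⁻¹).Perm ((pairsOf w).map Prod.swap) := by
  have h1 : (pairsOf w).map Prod.swap
      = List.ofFn (fun k : Fin r => ((w k : ℕ) + 1, (k : ℕ) + 1)) := by
    rw [pairsOf, List.map_ofFn]
    rfl
  set g : Fin r → ℕ × ℕ := fun j => ((j : ℕ) + 1, (w⁻¹ j : ℕ) + 1) with hg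
  have h2 : (fun k : Fin r => ((w k : ℕ) + 1, (k : ℕ) + 1)) = g ∘ ⇑w := by
    funext k
    simp [hg]
  have h3 : ((List.finRange r).map ⇑w).Perm (List.finRange r) := by
    apply List.perm_of_nodup_nodup_toFinset_eq
    · exact (List.nodup_finRange r).map w.injective
    · exact List.nodup_finRange r
    · apply Finset.ext
      intro j
      simp only [List.mem_toFinset, List.mem_map, List.mem_finRange, true_and, iff_true]
      exact ⟨w⁻¹ j, by simp⟩
  have h4 : (pairsOf w).map Prod.swap = ((List.finRange r).map ⇑w).map g := by
    rw [h1, h2, List.ofFn_eq_map, List.map_map]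
  rw [h4]
  have h5 : pairsOf w⁻¹ = (List.finRange r).map g := by
    rw [pairsOf, List.ofFn_eq_map]
  rw [h5]
  exact (h3.map g).symm

end RSaux


/-- If `w ↦ (P(w), Q(w))` under the Robinson–Schensted correspondence, then
`w⁻¹ ↦ (Q(w), P(w))`. -/
theorem stmt9 (r : ℕ) (w : Equiv.Perm (Fin r)) :
    (RS (word w⁻¹)).1 = (RS (word w)).2 ∧ (RS (word w⁻¹)).2 = (RS (word w)).1 := by
  have hRS : ∀ v : Equiv.Perm (Fin r), RS (word v)
      = (RSaux.pairsOf v).foldl RSaux.step ([], []) := by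
    intro v
    rw [RS, RSaux.pairs_word v]
    rfl
  have := RSaux.main_general (RSaux.pairsOf w) (RSaux.pairsOf w⁻¹)
    (RSaux.sorted_pairsOf w) (RSaux.sorted_pairsOf w⁻¹) (RSaux.perm_pairsOf w)
  rw [hRS w, hRS w⁻¹, this]
  exact ⟨rfl, rfl⟩
end
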